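/- arXiv:1301.4669 — 12 statements merged into one kernel-verified Lean document; each statement's English description precedes it below -/
import Mathlib

section
/- Let G be a finitely generated group and k ≥ 1. Then G preforms the free group F_k on Fin k (i.e., G ⊑ F_k) if and only if G admits a generating tuple of size k and G has no k-almost-identity. -/
/-!
If `t : Fin k' → F_k` generates, `lift t` has a section `σ`. Once the radius exceeds the lengths
of the relators `of i * (σ (t i))⁻¹` and of `σ w`, a marking `s` of `G` that agrees with `t` on
the ball gives the generating `k`-tuple `i ↦ lift s (σ (of i))` of `G`, which does not kill `w`.

Conversely, nontrivial normal subgroups of a free group intersect nontrivially, so the normal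
closures of the finitely many nontrivial words of length `≤ R` share a nontrivial element `x`.
A generating `k`-tuple of `G` that does not kill `x` kills none of these words, hence agrees with
the standard basis of `F_k` on the ball of radius `R`.
-/

/-- `G` preforms `H` (written `G ⊑ H` in the paper): there is a marking `t` of `H` such
that for every radius `R` there is a marking `s` of `G` of the same size whose marked
Cayley graph agrees with that of `(H, t)` on the ball of radius `R`. -/
def Preforms (G : Type*) (H : Type*) [Group G] [Group H] : Prop :=
  ∃ (k : ℕ) (t : Fin k → H), Subgroup.closure (Set.range t) = ⊤ ∧
    ∀ R : ℕ, ∃ s : Fin k → G, Subgroup.closure (Set.range s) = ⊤ ∧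
      ∀ w : FreeGroup (Fin k), (FreeGroup.toWord w).length ≤ R →
        (FreeGroup.lift s w = 1 ↔ FreeGroup.lift t w = 1)

open Subgroup

theorem exists_zpow_eq_zpow_of_mulEquiv_int {H : Type*} [Group H] (f : H ≃* Multiplicative ℤ)
    {a b : H} (ha : a ≠ 1) (hb : b ≠ 1) : ∃ i j : ℤ, a ^ i = b ^ j ∧ a ^ i ≠ 1 := by
  have hf : ∀ (x : H) (i : ℤ), (f (x ^ i)).toAdd = i * (f x).toAdd := by simp
  refine ⟨(f b).toAdd, (f a).toAdd, f.injective (Multiplicative.toAdd.injective ?_), ?_⟩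
  · rw [hf, hf, mul_comm]
  · rw [ne_eq, ← f.map_eq_one_iff, ← toAdd_eq_zero, hf]
    simpa [mul_eq_zero] using ⟨hb, ha⟩

namespace FreeGroup

variable {α : Type*}

theorem subsingleton_of_forall_commute (h : ∀ x y : FreeGroup α, Commute x y) :
    Subsingleton α := by
  classical
  refine ⟨fun a b => by_contra fun hab => ?_⟩
  let φ : FreeGroup α →* Equiv.Perm (Fin 3) :=
    lift fun x => if x = a then Equiv.swap 0 1 else Equiv.swap 0 2
  have := (h (of a) (of b)).map φ
  simp only [φ, lift_apply_of, if_neg (Ne.symm hab)] at this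
  exact absurd this.eq (by decide)

open scoped IsMulCommutative in
/-- `closure {a, b}` is free (Nielsen–Schreier) and abelian, hence infinite cyclic. -/
theorem exists_zpow_eq_zpow_of_commute {a b : FreeGroup α} (hab : Commute a b) (ha : a ≠ 1)
    (hb : b ≠ 1) : ∃ i j : ℤ, a ^ i = b ^ j ∧ a ^ i ≠ 1 := by
  let H := closure {a, b}
  have : IsMulCommutative H := isMulCommutative_closure <| by
    rintro x (rfl | rfl) y (rfl | rfl)
    exacts [rfl, hab.eq, hab.symm.eq, rfl]
  let e : H ≃* FreeGroup (IsFreeGroup.Generators H) := IsFreeGroup.toFreeGroup H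
  have : Subsingleton (IsFreeGroup.Generators H) := subsingleton_of_forall_commute fun x y => by
    simpa using (Commute.all (e.symm x) (e.symm y)).map e
  let a' : H := ⟨a, subset_closure (by simp)⟩
  let b' : H := ⟨b, subset_closure (by simp)⟩
  have : Nonempty (IsFreeGroup.Generators H) := by
    by_contra hX
    rw [not_nonempty_iff] at hX
    exact ha (congrArg Subtype.val (e.injective (Subsingleton.elim _ _) : a' = 1))
  have : Unique (IsFreeGroup.Generators H) := uniqueOfSubsingleton (Classical.arbitrary _)
  obtain ⟨i, j, hij, hi⟩ := exists_zpow_eq_zpow_of_mulEquiv_int (e.trans mulEquivIntOfUnique)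
    (a := a') (b := b') (by simpa [a'] using ha) (by simpa [b'] using hb)
  exact ⟨i, j, congrArg Subtype.val hij, by simpa [a'] using hi⟩

open scoped commutatorElement in
/-- Commuting elements have a common nontrivial power; otherwise their commutator does the job. -/
theorem exists_ne_one_mem_inf {N M : Subgroup (FreeGroup α)} [N.Normal] [M.Normal]
    {n m : FreeGroup α} (hn : n ∈ N) (hm : m ∈ M) (hn1 : n ≠ 1) (hm1 : m ≠ 1) :
    ∃ x ≠ 1, x ∈ N ⊓ M := by
  by_cases hc : Commute n m
  · obtain ⟨i, j, hij, hi⟩ := exists_zpow_eq_zpow_of_commute hc hn1 hm1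
    exact ⟨n ^ i, hi, N.zpow_mem hn i, hij ▸ M.zpow_mem hm j⟩
  · exact ⟨⁅n, m⁆, mt commutatorElement_eq_one_iff_commute.mp hc,
      commutator_le_inf N M (commutator_mem_commutator hn hm)⟩

theorem exists_ne_one_forall_mem_normalClosure {W : Finset (FreeGroup α)} (hW : W.Nonempty)
    (h1 : 1 ∉ W) : ∃ x ≠ 1, ∀ w ∈ W, x ∈ normalClosure {w} := by
  induction hW using Finset.Nonempty.cons_induction with
  | singleton w =>
    refine ⟨w, fun h => h1 (h ▸ Finset.mem_singleton_self w), fun v hv => ?_⟩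
    rw [Finset.mem_singleton.mp hv]
    exact subset_normalClosure rfl
  | cons w W hwW hW ih =>
    obtain ⟨x, hx1, hx⟩ := ih (by simp_all)
    obtain ⟨y, hy1, hyw, hyx⟩ :=
      exists_ne_one_mem_inf (N := normalClosure {w}) (M := normalClosure {x})
        (subset_normalClosure rfl) (subset_normalClosure rfl) (by rintro rfl; simp at h1) hx1
    refine ⟨y, hy1, (Finset.forall_mem_cons hwW _).mpr ⟨hyw, fun v hv => ?_⟩⟩
    exact normalClosure_le_normal (Set.singleton_subset_iff.mpr (hx v hv)) hyx

theorem finite_setOf_toWord_length_le [DecidableEq α] [Finite α] (R : ℕ) :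
    {w : FreeGroup α | w.toWord.length ≤ R}.Finite :=
  (List.finite_length_le _ R).preimage toWord_injective.injOn

theorem exists_lift_comp_eq_id {β : Type*} {t : α → FreeGroup β}
    (ht : closure (Set.range t) = ⊤) :
    ∃ σ : FreeGroup β →* FreeGroup α, (lift t).comp σ = MonoidHom.id _ := by
  choose y hy using fun j => lift_surjective_iff_closure_range_eq_top.mpr ht (of j)
  exact ⟨lift y, ext_hom _ _ fun j => by simp [hy]⟩

end FreeGroup

theorem exists_generating_forall_lift_ne_one {G β : Type*} [Group G]
    (hgen : ∃ g : β → G, closure (Set.range g) = ⊤)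
    (hsep : ∀ w : FreeGroup β, w ≠ 1 →
      ∃ g : β → G, closure (Set.range g) = ⊤ ∧ FreeGroup.lift g w ≠ 1)
    {W : Finset (FreeGroup β)} (h1 : 1 ∉ W) :
    ∃ g : β → G, closure (Set.range g) = ⊤ ∧ ∀ w ∈ W, FreeGroup.lift g w ≠ 1 := by
  obtain rfl | hW := W.eq_empty_or_nonempty
  · simpa using hgen
  obtain ⟨x, hx1, hx⟩ := FreeGroup.exists_ne_one_forall_mem_normalClosure hW h1
  obtain ⟨g, hg, hgx⟩ := hsep x hx1
  refine ⟨g, hg, fun w hw hgw => hgx ?_⟩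
  exact normalClosure_le_normal (N := (FreeGroup.lift g).ker) (by simpa using hgw) (hx w hw)

open FreeGroup in
theorem Preforms.exists_generating_lift_eq_one_imp {G β : Type*} [Group G]
    (h : Preforms G (FreeGroup β)) (w : FreeGroup β) :
    ∃ g : β → G, closure (Set.range g) = ⊤ ∧ (lift g w = 1 → w = 1) := by
  obtain ⟨k, t, ht, hR⟩ := h
  obtain ⟨σ, hσ⟩ := exists_lift_comp_eq_id ht
  have hπσ : ∀ x, lift t (σ x) = x := DFunLike.congr_fun hσ
  -- Killing these relators makes `s i = lift s (σ (t i))`, so `i ↦ lift s (σ (of i))` generates.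
  let n : Fin k → FreeGroup (Fin k) := fun i => of i * (σ (t i))⁻¹
  obtain ⟨s, hs, hst⟩ :=
    hR (max (Finset.univ.sup fun i => (n i).toWord.length) (σ w).toWord.length)
  have hsn : ∀ i, lift s (n i) = 1 := fun i =>
    (hst (n i) (le_max_of_le_left (Finset.le_sup (f := fun i => (n i).toWord.length)
      (Finset.mem_univ i)))).mpr (by simp [n, hπσ])
  refine ⟨lift.symm ((lift s).comp σ), ?_, fun hw => ?_⟩
  · rw [← range_lift_eq_closure, Equiv.apply_symm_apply, eq_top_iff, ← hs, closure_le]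
    rintro _ ⟨i, rfl⟩
    exact ⟨t i, (mul_inv_eq_one.mp (by simpa [n] using hsn i)).symm⟩
  · rw [Equiv.apply_symm_apply] at hw
    simpa [hπσ] using (hst (σ w) (le_max_right _ _)).mp hw

theorem preforms_freeGroup_of_forall_lift_ne_one {G : Type*} [Group G] {k : ℕ}
    (hgen : ∃ g : Fin k → G, closure (Set.range g) = ⊤)
    (hsep : ∀ w : FreeGroup (Fin k), w ≠ 1 →
      ∃ g : Fin k → G, closure (Set.range g) = ⊤ ∧ FreeGroup.lift g w ≠ 1) :
    Preforms G (FreeGroup (Fin k)) := by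
  refine ⟨k, FreeGroup.of, FreeGroup.closure_range_of _, fun R => ?_⟩
  obtain ⟨g, hg, hgW⟩ := exists_generating_forall_lift_ne_one hgen hsep
    (Finset.notMem_erase 1 (FreeGroup.finite_setOf_toWord_length_le R).toFinset)
  refine ⟨g, hg, fun w hw => ?_⟩
  rw [FreeGroup.lift_of_apply]
  exact ⟨fun hgw => by_contra fun hw1 => hgW w (by simp [hw, hw1]) hgw, fun hw1 => by simp [hw1]⟩

theorem preforms_freeGroup_iff_no_almost_identity_general
    (G : Type*) [Group G] (k : ℕ) :
    Preforms G (FreeGroup (Fin k)) ↔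
      ((∃ g : Fin k → G, Subgroup.closure (Set.range g) = ⊤) ∧
        ∀ w : FreeGroup (Fin k), w ≠ 1 →
          ∃ g : Fin k → G, Subgroup.closure (Set.range g) = ⊤ ∧ FreeGroup.lift g w ≠ 1) := by
  refine ⟨fun h => ⟨?_, fun w hw => ?_⟩,
    fun ⟨hgen, hsep⟩ => preforms_freeGroup_of_forall_lift_ne_one hgen hsep⟩
  · obtain ⟨g, hg, -⟩ := h.exists_generating_lift_eq_one_imp 1
    exact ⟨g, hg⟩
  · obtain ⟨g, hg, hgw⟩ := h.exists_generating_lift_eq_one_imp w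
    exact ⟨g, hg, mt hgw hw⟩

/-- A finitely generated group `G` preforms the free group `F_k` (for `k ≥ 1`) if and only
if `G` admits a generating tuple of size `k` and has no `k`-almost-identity. -/
theorem preforms_freeGroup_iff_no_almost_identity
    (G : Type*) [Group G] (hG : Group.FG G) (k : ℕ) (hk : 1 ≤ k) :
    Preforms G (FreeGroup (Fin k)) ↔
      ((∃ g : Fin k → G, Subgroup.closure (Set.range g) = ⊤) ∧
        ∀ w : FreeGroup (Fin k), w ≠ 1 →
          ∃ g : Fin k → G, Subgroup.closure (Set.range g) = ⊤ ∧ FreeGroup.lift g w ≠ 1) :=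
  preforms_freeGroup_iff_no_almost_identity_general G k
end

section
/- Let G and H be finitely generated groups with G ⊑ H. For a group K and a finite generating tuple s : Fin k → K, let ν_{K,s}(R) denote the number of elements of K expressible as a product of at most R factors, each of which is some s i or some (s i)⁻¹, and set λ_{K,s} := ⨅_{R ≥ 1} (ν_{K,s}(R))^{1/R} (which equals lim_{R→∞} (ν_{K,s}(R))^{1/R} by submultiplicativity of ν_{K,s}). Then the infimum of λ_{G,s} over all finite generating tuples s of G is at most the infimum of λ_{H,t} over all finite generating tuples t of H. In particular, if G has exponential growth (λ_{G,s} > 1 for some s) and H has subexponential growth (λ_{H,t} = 1 for all t), then G has non-uniform exponential growth (inf_s λ_{G,s} = 1). -/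
/-- `ν_{K,s}(R)`: the number of elements of `K` expressible as a product of at most `R`
generators from the tuple `s` and their inverses. -/
noncomputable def growthBall {K : Type*} [Group K] {k : ℕ} (s : Fin k → K) (R : ℕ) : ℕ :=
  Nat.card {x : K | ∃ w : FreeGroup (Fin k),
    (FreeGroup.toWord w).length ≤ R ∧ FreeGroup.lift s w = x}

/-- `λ_{K,s} = ⨅_{R ≥ 1} ν_{K,s}(R)^{1/R}`, the exponential growth rate of `K` with
respect to the generating tuple `s`. -/
noncomputable def growthRate {K : Type*} [Group K] {k : ℕ} (s : Fin k → K) : ℝ :=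
  ⨅ R : {R : ℕ // 1 ≤ R}, (growthBall s R.1 : ℝ) ^ ((R.1 : ℝ)⁻¹)

section Aux

variable {K : Type*} [Group K] {k : ℕ}

lemma ballSet_eq (s : Fin k → K) (R : ℕ) :
    {x : K | ∃ w : FreeGroup (Fin k),
        (FreeGroup.toWord w).length ≤ R ∧ FreeGroup.lift s w = x}
      = (FreeGroup.lift s) '' {w | (FreeGroup.toWord w).length ≤ R} := by
  ext x
  simp only [Set.mem_image, Set.mem_setOf_eq]

lemma wordSet_finite (R : ℕ) :
    {w : FreeGroup (Fin k) | (FreeGroup.toWord w).length ≤ R}.Finite := by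
  have : {w : FreeGroup (Fin k) | (FreeGroup.toWord w).length ≤ R}
      = FreeGroup.toWord ⁻¹' {l | l.length ≤ R} := rfl
  rw [this]
  exact Set.Finite.preimage FreeGroup.toWord_injective.injOn
    (List.finite_length_le _ R)

lemma one_le_growthBall (s : Fin k → K) (R : ℕ) : 1 ≤ growthBall s R := by
  unfold growthBall
  rw [ballSet_eq]
  have hfin := (wordSet_finite (k := k) R).image (FreeGroup.lift s)
  haveI := hfin.to_subtype
  haveI : Nonempty ((FreeGroup.lift s) ''
      {w : FreeGroup (Fin k) | (FreeGroup.toWord w).length ≤ R}) := by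
    refine Set.Nonempty.to_subtype ⟨1, ⟨1, ?_, map_one _⟩⟩
    simp [FreeGroup.toWord_one]
  exact Nat.card_pos

lemma one_le_growthRate (s : Fin k → K) : 1 ≤ growthRate s := by
  refine le_ciInf fun R => ?_
  refine Real.one_le_rpow ?_ (by positivity)
  exact_mod_cast one_le_growthBall s R.1

lemma bddBelow_growth_family (s : Fin k → K) :
    BddBelow (Set.range fun R : {R : ℕ // 1 ≤ R} =>
      (growthBall s R.1 : ℝ) ^ ((R.1 : ℝ)⁻¹)) := by
  refine ⟨0, ?_⟩
  rintro x ⟨R, rfl⟩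
  positivity

lemma card_image_eq_of_fiber_iff {α β γ : Type*} (W : Set α) (f : α → β) (g : α → γ)
    (h : ∀ a ∈ W, ∀ b ∈ W, (f a = f b ↔ g a = g b)) :
    Nat.card (f '' W) = Nat.card (g '' W) := by
  have hmem : ∀ y : f '' W, ∃ a, a ∈ W ∧ f a = y.1 := fun y => y.2
  choose pre hpreW hpref using hmem
  refine Nat.card_eq_of_bijective (fun y => ⟨g (pre y), ⟨pre y, hpreW y, rfl⟩⟩) ⟨?_, ?_⟩
  · intro y₁ y₂ he
    have h1 : g (pre y₁) = g (pre y₂) := congrArg Subtype.val he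
    have h2 : f (pre y₁) = f (pre y₂) := (h _ (hpreW y₁) _ (hpreW y₂)).2 h1
    rw [hpref y₁, hpref y₂] at h2
    exact Subtype.ext h2
  · rintro ⟨z, a, haW, rfl⟩
    refine ⟨⟨f a, ⟨a, haW, rfl⟩⟩, ?_⟩
    apply Subtype.ext
    exact (h _ (hpreW ⟨f a, ⟨a, haW, rfl⟩⟩) _ haW).1 (hpref _)

lemma growthBall_eq_of_word_iff {G H : Type*} [Group G] [Group H] {k : ℕ}
    {s : Fin k → G} {t : Fin k → H} {R : ℕ}
    (h : ∀ w : FreeGroup (Fin k), (FreeGroup.toWord w).length ≤ 2 * R →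
      (FreeGroup.lift s w = 1 ↔ FreeGroup.lift t w = 1)) :
    growthBall s R = growthBall t R := by
  unfold growthBall
  rw [ballSet_eq, ballSet_eq]
  refine card_image_eq_of_fiber_iff _ _ _ fun a ha b hb => ?_
  have hab : (FreeGroup.toWord (a * b⁻¹)).length ≤ 2 * R := by
    have h1 : FreeGroup.norm (a * b⁻¹) ≤ FreeGroup.norm a + FreeGroup.norm b⁻¹ :=
      FreeGroup.norm_mul_le a b⁻¹
    have h2 : FreeGroup.norm b⁻¹ = FreeGroup.norm b := FreeGroup.norm_inv_eq
    simp only [FreeGroup.norm] at h1 h2 ⊢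
    simp only [Set.mem_setOf_eq] at ha hb
    omega
  have key := h _ hab
  rw [map_mul, map_mul, map_inv, map_inv, mul_inv_eq_one, mul_inv_eq_one] at key
  exact key

lemma norm_lift_le {α β : Type*} [DecidableEq α] [DecidableEq β]
    (u : α → FreeGroup β) (C : ℕ) (hu : ∀ a, (u a).norm ≤ C) (w : FreeGroup α) :
    ((FreeGroup.lift u) w).norm ≤ C * w.norm := by
  have key : ∀ l : List (α × Bool),
      ((FreeGroup.lift u) (FreeGroup.mk l)).norm ≤ C * l.length := by
    intro l
    induction l with
    | nil =>
      have h1 : FreeGroup.mk ([] : List (α × Bool)) = 1 := rfl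
      simp [h1]
    | cons x l ih =>
      have hx : FreeGroup.mk (x :: l) = FreeGroup.mk [x] * FreeGroup.mk l := by
        rw [FreeGroup.mul_mk]; rfl
      have h1 : ((FreeGroup.lift u) (FreeGroup.mk [x])).norm ≤ C := by
        obtain ⟨a, b⟩ := x
        cases b
        · have hinv : FreeGroup.mk [(a, false)] = (FreeGroup.of a)⁻¹ := by
            rw [show FreeGroup.of a = FreeGroup.mk [(a, true)] from rfl, FreeGroup.inv_mk]
            simp [FreeGroup.invRev]
          rw [hinv, map_inv, FreeGroup.lift_apply_of, FreeGroup.norm_inv_eq]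
          exact hu a
        · have hof : FreeGroup.mk [(a, true)] = FreeGroup.of a := rfl
          rw [hof, FreeGroup.lift_apply_of]
          exact hu a
      calc ((FreeGroup.lift u) (FreeGroup.mk (x :: l))).norm
          = ((FreeGroup.lift u) (FreeGroup.mk [x])
              * (FreeGroup.lift u) (FreeGroup.mk l)).norm := by rw [hx, map_mul]
        _ ≤ ((FreeGroup.lift u) (FreeGroup.mk [x])).norm
              + ((FreeGroup.lift u) (FreeGroup.mk l)).norm := FreeGroup.norm_mul_le _ _
        _ ≤ C + C * l.length := add_le_add h1 ih
        _ = C * (x :: l).length := by simp [List.length_cons]; ring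
  calc ((FreeGroup.lift u) w).norm
      = ((FreeGroup.lift u) (FreeGroup.mk w.toWord)).norm := by rw [FreeGroup.mk_toWord]
    _ ≤ C * w.toWord.length := key _
    _ = C * w.norm := rfl

/-- The key lemma: if `G ⊑ H` then for *any* finite generating tuple `t'` of `H`,
the infimum of growth rates of `G` is at most `growthRate t'`. -/
lemma sInf_le_growthRate_of_preforms {G H : Type*} [Group G] [Group H]
    (hpre : Preforms G H)
    (hne : {l : ℝ | ∃ (k : ℕ) (s : Fin k → G),
        Subgroup.closure (Set.range s) = ⊤ ∧ l = growthRate s}.Nonempty)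
    {k' : ℕ} (t' : Fin k' → H) (ht' : Subgroup.closure (Set.range t') = ⊤) :
    sInf {l : ℝ | ∃ (k : ℕ) (s : Fin k → G),
        Subgroup.closure (Set.range s) = ⊤ ∧ l = growthRate s} ≤ growthRate t' := by
  classical
  obtain ⟨k, t, ht, hs⟩ := hpre
  set L : Set ℝ := {l : ℝ | ∃ (k : ℕ) (s : Fin k → G),
      Subgroup.closure (Set.range s) = ⊤ ∧ l = growthRate s} with hL
  have hbdd : BddBelow L := by
    refine ⟨1, ?_⟩
    rintro x ⟨k₀, s₀, _, rfl⟩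
    exact one_le_growthRate s₀
  -- surjectivity of the lifts
  have hsurj_t : ∀ h : H, ∃ w : FreeGroup (Fin k), FreeGroup.lift t w = h := by
    intro h
    have : h ∈ (FreeGroup.lift t).range := by
      rw [FreeGroup.range_lift_eq_closure, ht]; trivial
    exact this
  have hsurj_t' : ∀ h : H, ∃ w : FreeGroup (Fin k'), FreeGroup.lift t' w = h := by
    intro h
    have : h ∈ (FreeGroup.lift t').range := by
      rw [FreeGroup.range_lift_eq_closure, ht']; trivial
    exact this
  choose u hu using fun j : Fin k' => hsurj_t (t' j)
  choose v hv using fun i : Fin k => hsurj_t' (t i)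
  -- the substitution homomorphism
  set σ : FreeGroup (Fin k') →* FreeGroup (Fin k) := FreeGroup.lift u with hσ
  have hσt : ∀ w, FreeGroup.lift t (σ w) = FreeGroup.lift t' w := by
    intro w
    have : (FreeGroup.lift t).comp σ = FreeGroup.lift t' := by
      refine FreeGroup.ext_hom _ _ fun j => ?_
      simp [hσ, FreeGroup.lift_apply_of, hu]
    exact DFunLike.congr_fun this w
  set C : ℕ := Finset.univ.sup fun j : Fin k' => (u j).norm with hC
  have hCle : ∀ j, (u j).norm ≤ C := fun j => Finset.le_sup (f := fun j : Fin k' => (u j).norm) (Finset.mem_univ j)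
  set D : ℕ := Finset.univ.sup fun i : Fin k => (σ (v i)).norm + 1 with hD
  have hDle : ∀ i, (σ (v i)).norm + 1 ≤ D := fun i => Finset.le_sup (f := fun i : Fin k => (σ (v i)).norm + 1) (Finset.mem_univ i)
  -- main estimate for each radius R ≥ 1
  have main : ∀ R : {R : ℕ // 1 ≤ R},
      sInf L ≤ (growthBall t' R.1 : ℝ) ^ ((R.1 : ℝ)⁻¹) := by
    rintro ⟨R, hR⟩
    obtain ⟨s, hsgen, hword⟩ := hs (2 * R * C + D)
    set s' : Fin k' → G := fun j => FreeGroup.lift s (u j) with hs'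
    have hσs : ∀ w, FreeGroup.lift s (σ w) = FreeGroup.lift s' w := by
      intro w
      have : (FreeGroup.lift s).comp σ = FreeGroup.lift s' := by
        refine FreeGroup.ext_hom _ _ fun j => ?_
        simp [hσ, hs', FreeGroup.lift_apply_of]
      exact DFunLike.congr_fun this w
    -- s' generates G
    have hs'gen : Subgroup.closure (Set.range s') = ⊤ := by
      rw [eq_top_iff, ← hsgen]
      rw [Subgroup.closure_le]
      rintro x ⟨i, rfl⟩
      -- the relation word
      have hrel : FreeGroup.lift s (σ (v i) * (FreeGroup.of i)⁻¹) = 1 := by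
        refine (hword _ ?_).2 ?_
        · have h1 : FreeGroup.norm (σ (v i) * (FreeGroup.of i)⁻¹)
              ≤ FreeGroup.norm (σ (v i)) + FreeGroup.norm (FreeGroup.of i)⁻¹ :=
            FreeGroup.norm_mul_le _ _
          have h2 : FreeGroup.norm (FreeGroup.of i)⁻¹ = 1 := by
            rw [FreeGroup.norm_inv_eq, FreeGroup.norm_of]
          have := hDle i
          show FreeGroup.norm _ ≤ _
          omega
        · rw [map_mul, map_inv, hσt, hv, FreeGroup.lift_apply_of, mul_inv_cancel]
      rw [map_mul, map_inv, FreeGroup.lift_apply_of, mul_inv_eq_one] at hrel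
      have : s i = FreeGroup.lift s' (v i) := by rw [← hσs, hrel]
      rw [this]
      have : FreeGroup.lift s' (v i) ∈ (FreeGroup.lift s').range := ⟨v i, rfl⟩
      rwa [FreeGroup.range_lift_eq_closure] at this
    -- the balls agree
    have hball : growthBall s' R = growthBall t' R := by
      refine growthBall_eq_of_word_iff fun w hw => ?_
      have hlen : (FreeGroup.toWord (σ w)).length ≤ 2 * R * C + D := by
        have h1 : (σ w).norm ≤ C * w.norm := norm_lift_le u C hCle w
        have h2 : w.norm ≤ 2 * R := hw
        have h4 : (σ w).norm ≤ C * (2 * R) := le_trans h1 (Nat.mul_le_mul_left C h2)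
        have h5 : C * (2 * R) = 2 * R * C := by ring
        show FreeGroup.norm _ ≤ _
        omega
      rw [← hσs, ← hσt]
      exact hword _ hlen
    -- conclude
    have step1 : sInf L ≤ growthRate s' := csInf_le hbdd ⟨k', s', hs'gen, rfl⟩
    have step2 : growthRate s' ≤ (growthBall s' R : ℝ) ^ ((R : ℝ)⁻¹) :=
      ciInf_le (bddBelow_growth_family s') ⟨R, hR⟩
    rw [hball] at step2
    exact le_trans step1 step2
  exact le_ciInf main

end Aux

/-- If `G ⊑ H` then `inf_s λ_{G,s} ≤ inf_t λ_{H,t}`; in particular, if `G` has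
exponential growth and `H` has subexponential growth, then `G` has non-uniform
exponential growth. -/
theorem growth_of_preforms
    (G H : Type*) [Group G] [Group H] (hG : Group.FG G) (hH : Group.FG H)
    (hpre : Preforms G H) :
    sInf {l : ℝ | ∃ (k : ℕ) (s : Fin k → G),
        Subgroup.closure (Set.range s) = ⊤ ∧ l = growthRate s} ≤
      sInf {l : ℝ | ∃ (k : ℕ) (t : Fin k → H),
        Subgroup.closure (Set.range t) = ⊤ ∧ l = growthRate t} ∧
    (((∃ (k : ℕ) (s : Fin k → G), Subgroup.closure (Set.range s) = ⊤ ∧ 1 < growthRate s) ∧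
        (∀ (k : ℕ) (t : Fin k → H), Subgroup.closure (Set.range t) = ⊤ → growthRate t = 1)) →
      sInf {l : ℝ | ∃ (k : ℕ) (s : Fin k → G),
        Subgroup.closure (Set.range s) = ⊤ ∧ l = growthRate s} = 1) := by
  classical
  set L : Set ℝ := {l : ℝ | ∃ (k : ℕ) (s : Fin k → G),
      Subgroup.closure (Set.range s) = ⊤ ∧ l = growthRate s} with hL
  set M : Set ℝ := {l : ℝ | ∃ (k : ℕ) (t : Fin k → H),
      Subgroup.closure (Set.range t) = ⊤ ∧ l = growthRate t} with hM
  -- L is nonempty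
  have hLne : L.Nonempty := by
    obtain ⟨S, hScl, hSfin⟩ := Group.fg_iff.1 hG
    haveI := hSfin.fintype
    set n := Fintype.card S
    set e := Fintype.equivFin S
    refine ⟨growthRate (fun i : Fin n => ((e.symm i : S) : G)), n, _, ?_, rfl⟩
    have hrange : Set.range (fun i : Fin n => ((e.symm i : S) : G)) = S := by
      have : (fun i : Fin n => ((e.symm i : S) : G))
          = (Subtype.val : S → G) ∘ e.symm := rfl
      rw [this, Set.range_comp, Equiv.range_eq_univ, Set.image_univ, Subtype.range_coe]
    rw [hrange]
    exact hScl
  -- M is nonempty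
  have hMne : M.Nonempty := by
    obtain ⟨k, t, ht, -⟩ := hpre
    exact ⟨growthRate t, k, t, ht, rfl⟩
  have part1 : sInf L ≤ sInf M := by
    refine le_csInf hMne ?_
    rintro b ⟨k', t', ht', rfl⟩
    exact sInf_le_growthRate_of_preforms hpre hLne t' ht'
  refine ⟨part1, ?_⟩
  rintro ⟨-, hsub⟩
  have hM1 : sInf M = 1 := by
    have : M = {1} := by
      apply Set.eq_singleton_iff_nonempty_unique_mem.2
      refine ⟨hMne, ?_⟩
      rintro x ⟨k, t, ht, rfl⟩
      exact hsub k t ht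
    rw [this, csInf_singleton]
  have hge : 1 ≤ sInf L := by
    refine le_csInf hLne ?_
    rintro b ⟨k₀, s₀, _, rfl⟩
    exact one_le_growthRate s₀
  have hle : sInf L ≤ 1 := hM1 ▸ part1
  linarith
end

section
/- Any two infinite finitely generated abelian groups A and B have a common upper bound for the preforming relation: there exists n : ℕ such that A ⊑ ℤ^n and B ⊑ ℤ^n, where ℤ^n denotes the free abelian group Fin n → ℤ. (Consequently, the restriction of ⊑ to infinite finitely generated abelian groups is a net.) -/
/-!
An infinite finitely generated abelian group `A` admits a surjection `π : A → ℤ`, say `π x = 1`,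
and for every large `n` it is generated by `x` together with `n` further elements `g i`. Given a
radius `R`, multiply each generator by a power of `x` so that `π (g i) = (R + 1) ^ i`. Since `A`
is abelian, a word `w` evaluates to `∏ g i ^ e i`, where `e i` is the exponent sum of the `i`-th
letter in `w`, and `|e i| ≤ R` when `w` has length at most `R`. If the value is trivial,
applying `π` gives `∑ (R + 1) ^ i * e i = 0`, so every `e i` vanishes by uniqueness of
base-`(R + 1)` expansions: exactly the words that vanish on the standard basis of `ℤ ^ (n + 1)`.
Taking `n` large for both groups gives the common bound.
-/

open FreeGroup Multiplicative

/-- `lift (intStdBasis ι) w i` is the exponent sum of the letter `i` in the word `w`. -/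
def intStdBasis (ι : Type*) [DecidableEq ι] : ι → ι → Multiplicative ℤ :=
  fun i => Pi.mulSingle i (ofAdd 1)

theorem closure_range_intStdBasis (ι : Type*) [DecidableEq ι] [Fintype ι] :
    Subgroup.closure (Set.range (intStdBasis ι)) = ⊤ := by
  refine eq_top_iff.mpr fun v _ => ?_
  rw [← Finset.univ_prod_mulSingle v]
  refine Subgroup.prod_mem _ fun i _ => ?_
  have : Pi.mulSingle i (v i) = intStdBasis ι i ^ toAdd (v i) := by
    rw [intStdBasis, ← Pi.mulSingle_zpow, ← ofAdd_zsmul, smul_eq_mul, mul_one, ofAdd_toAdd]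
  rw [this]
  exact Subgroup.zpow_mem _ (Subgroup.subset_closure (Set.mem_range_self i)) _

theorem FreeGroup.lift_eq_prod_zpow {ι G : Type*} [DecidableEq ι] [Fintype ι] [CommGroup G]
    (s : ι → G) (w : FreeGroup ι) :
    lift s w = ∏ i, s i ^ toAdd (lift (intStdBasis ι) w i) := by
  induction w using FreeGroup.induction_on with
  | C1 => simp
  | of j => simp [intStdBasis, Pi.mulSingle_apply, apply_ite]
  | inv_of j ih => simp [ih, zpow_neg, Finset.prod_inv_distrib]
  | mul u v ihu ihv => simp [ihu, ihv, zpow_add, Finset.prod_mul_distrib]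

theorem FreeGroup.abs_toAdd_lift_le {α : Type*} [DecidableEq α] (f : α → Multiplicative ℤ)
    (hf : ∀ j, |toAdd (f j)| ≤ 1) (w : FreeGroup α) :
    |toAdd (lift f w)| ≤ (toWord w).length := by
  nth_rw 1 [← mk_toWord (x := w)]
  rw [lift_mk]
  induction toWord w with
  | nil => simp
  | cons a L ih =>
    have ha : |toAdd (cond a.2 (f a.1) (f a.1)⁻¹)| ≤ 1 := by cases a.2 <;> simpa using hf a.1
    rw [List.map_cons, List.prod_cons, toAdd_mul, List.length_cons, Nat.cast_succ]
    exact (abs_add_le _ _).trans (by linarith)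

theorem FreeGroup.lift_pi_apply {α ι : Type*} {M : ι → Type*} [∀ i, Group (M i)]
    (f : α → ∀ i, M i) (w : FreeGroup α) (i : ι) :
    lift f w i = lift (fun j => f j i) w := by
  induction w using FreeGroup.induction_on <;> simp_all

theorem FreeGroup.abs_toAdd_lift_intStdBasis_le {ι : Type*} [DecidableEq ι] (w : FreeGroup ι)
    (i : ι) :
    |toAdd (lift (intStdBasis ι) w i)| ≤ (toWord w).length := by
  rw [lift_pi_apply]
  refine abs_toAdd_lift_le _ (fun j => ?_) w
  by_cases h : j = i <;> simp [intStdBasis, h]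

theorem Int.eq_zero_of_sum_pow_mul_eq_zero {n : ℕ} {B : ℤ} {c : Fin n → ℤ}
    (hc : ∀ i, |c i| < B) (h : ∑ i : Fin n, B ^ (i : ℕ) * c i = 0) : c = 0 := by
  induction n with
  | zero => exact Subsingleton.elim _ _
  | succ n ih =>
    have hsplit : c 0 + B * ∑ i : Fin n, B ^ (i : ℕ) * c i.succ = 0 := by
      rw [← h, Fin.sum_univ_succ, Finset.mul_sum]
      simp [pow_succ, mul_comm, mul_left_comm]
    have hdvd : B ∣ c 0 := by
      rw [eq_neg_of_add_eq_zero_left hsplit]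
      exact (dvd_mul_right B _).neg_right
    have hc0 : c 0 = 0 := Int.eq_zero_of_abs_lt_dvd hdvd (hc 0)
    have hB : B ≠ 0 := by linarith [abs_nonneg (c 0), hc 0]
    have htail := ih (fun i => hc i.succ)
      ((mul_eq_zero.mp (by simpa [hc0] using hsplit)).resolve_left hB)
    ext i
    cases i using Fin.cases with
    | zero => exact hc0
    | succ i => exact congrFun htail i

theorem AddCommGroup.exists_surjective_addMonoidHom_int (G : Type*) [AddCommGroup G]
    [AddGroup.FG G] [Infinite G] : ∃ f : G →+ ℤ, Function.Surjective f := by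
  obtain ⟨r, ι, _, p, hp, e, ⟨f⟩⟩ := AddCommGroup.equiv_free_prod_directSum_zmod G
  obtain ⟨i⟩ : Nonempty (Fin r) := by
    refine Fin.pos_iff_nonempty.mp (Nat.pos_of_ne_zero fun hr => ?_)
    subst hr
    have : ∀ i, NeZero (p i ^ e i) := fun i => ⟨pow_ne_zero _ (hp i).ne_zero⟩
    have : Finite (DirectSum ι fun i => ZMod (p i ^ e i)) :=
      Finite.of_equiv _ DFinsupp.equivFunOnFintype.symm
    exact not_finite_iff_infinite.mpr ‹Infinite G› (Finite.of_equiv _ f.toEquiv.symm)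
  refine ⟨(Finsupp.applyAddHom i).comp ((AddMonoidHom.fst _ _).comp f.toAddMonoidHom),
    fun k => ⟨f.symm (Finsupp.single i k, 0), by simp⟩⟩

theorem exists_surjective_monoidHom_multiplicative_int (A : Type*) [CommGroup A] [Infinite A]
    (hA : Group.FG A) : ∃ π : A →* Multiplicative ℤ, Function.Surjective π := by
  have : AddGroup.FG (Additive A) := GroupFG.iff_add_fg.mp hA
  obtain ⟨f, hf⟩ := AddCommGroup.exists_surjective_addMonoidHom_int (Additive A)
  exact ⟨AddMonoidHom.toMultiplicativeRight f,
    fun k => (hf (toAdd k)).imp fun a ha => congrArg ofAdd ha⟩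

theorem Group.FG.exists_fin_closure_range_eq_top {G : Type*} [Group G] (hG : Group.FG G) :
    ∃ m, ∀ n, m ≤ n → ∃ g : Fin n → G, Subgroup.closure (Set.range g) = ⊤ := by
  obtain ⟨S, hS⟩ := hG.out
  refine ⟨S.card, fun n hn => ⟨fun i => if h : (i : ℕ) < S.card then S.equivFin.symm ⟨i, h⟩ else 1,
    eq_top_iff.mpr (hS ▸ Subgroup.closure_mono fun x hx => ?_)⟩⟩
  refine ⟨Fin.castLE hn (S.equivFin ⟨x, hx⟩), ?_⟩
  simp

theorem Subgroup.closure_range_mul_zpow_zero {G : Type*} [Group G] {n : ℕ} (g : Fin (n + 1) → G)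
    (k : Fin (n + 1) → ℤ) (hk : k 0 = 0) :
    Subgroup.closure (Set.range fun i => g i * g 0 ^ k i) = Subgroup.closure (Set.range g) := by
  refine le_antisymm (Subgroup.closure_le _ |>.mpr ?_) (Subgroup.closure_le _ |>.mpr ?_)
  · rintro _ ⟨i, rfl⟩
    exact mul_mem (subset_closure (Set.mem_range_self i))
      (zpow_mem (subset_closure (Set.mem_range_self 0)) _)
  · have h0 : g 0 ∈ Subgroup.closure (Set.range fun i => g i * g 0 ^ k i) := by
      simpa [hk] using subset_closure (Set.mem_range_self (f := fun i => g i * g 0 ^ k i) 0)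
    rintro _ ⟨i, rfl⟩
    have : g i = (g i * g 0 ^ k i) * g 0 ^ (-k i) := by simp [mul_assoc]
    rw [SetLike.mem_coe, this]
    exact mul_mem (subset_closure (Set.mem_range_self i)) (zpow_mem h0 _)

theorem preforms_pi_of_generators {A : Type*} [CommGroup A] {n : ℕ} (π : A →* Multiplicative ℤ)
    (g : Fin (n + 1) → A) (hg : Subgroup.closure (Set.range g) = ⊤) (hg0 : π (g 0) = ofAdd 1) :
    Preforms A (Fin (n + 1) → Multiplicative ℤ) := by
  refine ⟨n + 1, intStdBasis _, closure_range_intStdBasis _, fun R => ?_⟩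
  set B : ℤ := R + 1
  let s : Fin (n + 1) → A := fun i => g i * g 0 ^ (B ^ (i : ℕ) - toAdd (π (g i)))
  have hπs : ∀ i, toAdd (π (s i)) = B ^ (i : ℕ) := by intro i; simp [s, hg0]
  have hs : Subgroup.closure (Set.range s) = ⊤ := by
    rw [Subgroup.closure_range_mul_zpow_zero g _ (by simp [hg0]), hg]
  refine ⟨s, hs, fun w hw => ⟨fun h => ?_, fun h => ?_⟩⟩
  · have hdig : ∑ i : Fin (n + 1), B ^ (i : ℕ) * toAdd (lift (intStdBasis _) w i) = 0 := by
      have := congrArg (fun a => toAdd (π a)) h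
      simpa [lift_eq_prod_zpow s w, toAdd_prod, hπs, mul_comm] using this
    have hR : ∀ i, |toAdd (lift (intStdBasis _) w i)| < B := fun i =>
      (abs_toAdd_lift_intStdBasis_le w i).trans_lt (by omega)
    funext i
    exact congrFun (Int.eq_zero_of_sum_pow_mul_eq_zero hR hdig) i
  · rw [lift_eq_prod_zpow, h]
    simp

theorem preforms_pi_succ_of_surjective {A : Type*} [CommGroup A] {π : A →* Multiplicative ℤ}
    (hπ : Function.Surjective π) {n : ℕ} (g : Fin n → A)
    (hg : Subgroup.closure (Set.range g) = ⊤) :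
    Preforms A (Fin (n + 1) → Multiplicative ℤ) := by
  obtain ⟨x, hx⟩ := hπ (ofAdd 1)
  refine preforms_pi_of_generators π (Fin.cons x g) (eq_top_iff.mpr ?_) (by simpa using hx)
  rw [← hg, Fin.range_cons]
  exact Subgroup.closure_mono (Set.subset_insert _ _)

/-- Any two infinite finitely generated abelian groups have a common upper bound of the
form `ℤ^n` for the preforming relation; hence `⊑` restricted to infinite finitely
generated abelian groups is a net. -/
theorem abelian_common_upper_bound
    (A B : Type*) [CommGroup A] [CommGroup B] [Infinite A] [Infinite B]
    (hA : Group.FG A) (hB : Group.FG B) :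
    ∃ n : ℕ, Preforms A (Fin n → Multiplicative ℤ) ∧
      Preforms B (Fin n → Multiplicative ℤ) := by
  obtain ⟨mA, hmA⟩ := hA.exists_fin_closure_range_eq_top
  obtain ⟨mB, hmB⟩ := hB.exists_fin_closure_range_eq_top
  obtain ⟨gA, hgA⟩ := hmA _ (le_max_left mA mB)
  obtain ⟨gB, hgB⟩ := hmB _ (le_max_right mA mB)
  obtain ⟨πA, hπA⟩ := exists_surjective_monoidHom_multiplicative_int A hA
  obtain ⟨πB, hπB⟩ := exists_surjective_monoidHom_multiplicative_int B hB
  exact ⟨_, preforms_pi_succ_of_surjective hπA gA hgA, preforms_pi_succ_of_surjective hπB gB hgB⟩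
end

section
/- For all natural numbers m, n ≥ 1, the free abelian group ℤ^m preforms ℤ^n (i.e., ℤ^m ⊑ ℤ^n) if and only if m ≤ n. -/
open Multiplicative

section MulEquiv

variable {ι G H : Type*} [Group G] [Group H] (e : G ≃* H) (c : ι → G)

theorem Subgroup.closure_range_mulEquiv_comp :
    Subgroup.closure (Set.range (e ∘ c)) = (Subgroup.closure (Set.range c)).map e := by
  rw [Set.range_comp, MonoidHom.map_closure]
  rfl

theorem FreeGroup.lift_mulEquiv_comp_eq_one_iff (w : FreeGroup ι) :
    FreeGroup.lift (e ∘ c) w = 1 ↔ FreeGroup.lift c w = 1 := by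
  have hcomp : FreeGroup.lift (e ∘ c) = (e : G →* H).comp (FreeGroup.lift c) := by
    ext
    simp
  rw [hcomp, MonoidHom.comp_apply, MonoidHom.coe_coe, map_eq_one_iff e e.injective]

end MulEquiv

theorem Preforms.of_mulEquiv {G H G' H' : Type*} [Group G] [Group H] [Group G'] [Group H']
    (e : G ≃* G') (f : H ≃* H') (h : Preforms G H) : Preforms G' H' := by
  obtain ⟨k, t, ht, hst⟩ := h
  refine ⟨k, f ∘ t, by simp [Subgroup.closure_range_mulEquiv_comp, ht], fun R => ?_⟩
  obtain ⟨s, hs, hsw⟩ := hst R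
  refine ⟨e ∘ s, by simp [Subgroup.closure_range_mulEquiv_comp, hs], fun w hw => ?_⟩
  simpa only [FreeGroup.lift_mulEquiv_comp_eq_one_iff] using hsw w hw

theorem preforms_congr {G H G' H' : Type*} [Group G] [Group H] [Group G'] [Group H']
    (e : G ≃* G') (f : H ≃* H') : Preforms G H ↔ Preforms G' H' :=
  ⟨.of_mulEquiv e f, .of_mulEquiv e.symm f.symm⟩

section Additive

variable {ι M : Type*} [AddCommGroup M]

theorem Subgroup.closure_range_eq_top_iff_span (c : ι → Multiplicative M) :
    Subgroup.closure (Set.range c) = ⊤ ↔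
      Submodule.span ℤ (Set.range (toAdd ∘ c)) = ⊤ := by
  rw [← Submodule.toAddSubgroup_inj, Submodule.span_int_eq_addSubgroupClosure,
    Submodule.top_toAddSubgroup, ← Subgroup.toAddSubgroup'.injective.eq_iff,
    Subgroup.toAddSubgroup'_closure, Set.range_comp, Equiv.image_eq_preimage_symm]
  rfl

theorem Subgroup.closure_range_eq_top_iff_surjective [Fintype ι] (c : ι → Multiplicative M) :
    Subgroup.closure (Set.range c) = ⊤ ↔
      Function.Surjective (Fintype.linearCombination ℤ (toAdd ∘ c)) := by
  rw [closure_range_eq_top_iff_span, ← LinearMap.range_eq_top, Fintype.range_linearCombination]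

end Additive

namespace FreeGroup

variable {ι : Type*} [DecidableEq ι]

def exponentSum : FreeGroup ι →* Multiplicative (ι → ℤ) :=
  lift fun i => ofAdd (Pi.single i 1)

theorem abs_toAdd_lift_le_norm (f : ι → Multiplicative ℤ)
    (hf : ∀ i, |toAdd (f i)| ≤ 1) (w : FreeGroup ι) : |toAdd (lift f w)| ≤ w.norm := by
  rw [norm]
  conv_lhs => rw [← w.mk_toWord]
  rw [lift_mk, toAdd_list_sum]
  induction w.toWord with
  | nil => simp
  | cons x L ih =>
    set y := toAdd (cond x.2 (f x.1) (f x.1)⁻¹)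
    have hy : |y| ≤ 1 := by rcases x with ⟨a, _ | _⟩ <;> simp [y, hf]
    simp only [List.map_cons, List.sum_cons, List.length_cons, Nat.cast_succ]
    exact (abs_add_le _ _).trans (by linarith)

theorem abs_exponentSum_le_norm (w : FreeGroup ι) (i : ι) :
    |toAdd (exponentSum w) i| ≤ w.norm := by
  have heval : (Pi.evalAddMonoidHom (fun _ => ℤ) i).toMultiplicative.comp exponentSum =
      lift fun j => ofAdd ((Pi.single j 1 : ι → ℤ) i) := by
    ext
    simp [exponentSum]
  have hbound := abs_toAdd_lift_le_norm (fun j => ofAdd ((Pi.single j 1 : ι → ℤ) i))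
    (fun j => by rw [toAdd_ofAdd, Pi.single_apply]; split_ifs <;> simp) w
  rwa [← heval] at hbound

theorem exponentSum_surjective [Finite ι] : Function.Surjective (exponentSum (ι := ι)) := by
  rw [← MonoidHom.range_eq_top, exponentSum, range_lift_eq_closure,
    Subgroup.closure_range_eq_top_iff_span]
  have hspan := (Pi.basisFun ℤ ι).span_eq
  simp only [funext (Pi.basisFun_apply ℤ ι)] at hspan
  exact hspan

variable [Fintype ι] {M : Type*} [AddCommGroup M]

theorem toAdd_lift (c : ι → Multiplicative M) (w : FreeGroup ι) :
    toAdd (lift c w) = Fintype.linearCombination ℤ (toAdd ∘ c) (toAdd (exponentSum w)) := by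
  have hfactor : lift c =
      (Fintype.linearCombination ℤ (toAdd ∘ c)).toAddMonoidHom.toMultiplicative.comp
        exponentSum := by
    ext
    simp [exponentSum]
  rw [hfactor]
  rfl

theorem lift_eq_one_iff (c : ι → Multiplicative M) (w : FreeGroup ι) :
    lift c w = 1 ↔
      toAdd (exponentSum w) ∈ LinearMap.ker (Fintype.linearCombination ℤ (toAdd ∘ c)) := by
  rw [LinearMap.mem_ker, ← toAdd_lift, toAdd_eq_zero]

end FreeGroup

universe u

theorem LinearMap.rank_le_of_ker_le_ker {R M : Type*} {N P : Type u} [Ring R]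
    [AddCommGroup M] [AddCommGroup N] [AddCommGroup P] [Module R M] [Module R N] [Module R P]
    {f : M →ₗ[R] N} {g : M →ₗ[R] P} (hf : Function.Surjective f)
    (hg : Function.Surjective g) (h : LinearMap.ker f ≤ LinearMap.ker g) :
    Module.rank R P ≤ Module.rank R N := by
  let e := f.quotKerEquivOfSurjective hf
  have hfactor : ∀ m, ((ker f).liftQ g h ∘ₗ e.symm.toLinearMap) (f m) = g m := fun m => by
    simp [e, quotKerEquivOfSurjective_symm_apply]
  exact LinearMap.rank_le_of_surjective _ fun p =>
    let ⟨m, hm⟩ := hg p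
    ⟨f m, (hfactor m).trans hm⟩

open FreeGroup in
theorem Preforms.rank_le {M N : Type u} [AddCommGroup M] [AddCommGroup N]
    (h : Preforms (Multiplicative M) (Multiplicative N)) :
    Module.rank ℤ M ≤ Module.rank ℤ N := by
  obtain ⟨k, t, ht, hst⟩ := h
  let T := Fintype.linearCombination ℤ (toAdd ∘ t)
  obtain ⟨U, hU⟩ := IsNoetherian.noetherian (LinearMap.ker T)
  choose word hword using fun u : Fin k → ℤ => exponentSum_surjective (ofAdd u)
  obtain ⟨s, hs, hsw⟩ := hst (U.sup fun u => (word u).norm)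
  refine LinearMap.rank_le_of_ker_le_ker
    ((Subgroup.closure_range_eq_top_iff_surjective t).mp ht)
    ((Subgroup.closure_range_eq_top_iff_surjective s).mp hs) ?_
  rw [← hU, Submodule.span_le]
  intro u hu
  have hlift := (hsw (word u) (Finset.le_sup (f := fun u => (word u).norm) hu)).mpr
  rw [lift_eq_one_iff, lift_eq_one_iff, hword, toAdd_ofAdd] at hlift
  exact hlift (hU ▸ Submodule.subset_span hu)

open FreeGroup in
theorem preforms_of_forall_abs_le {M N : Type*} [AddCommGroup M] [AddCommGroup N] {k : ℕ}
    (t : Fin k → N) (ht : Submodule.span ℤ (Set.range t) = ⊤)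
    (h : ∀ R : ℕ, ∃ s : Fin k → M, Submodule.span ℤ (Set.range s) = ⊤ ∧
      ∀ v : Fin k → ℤ, (∀ i, |v i| ≤ R) →
        (Fintype.linearCombination ℤ s v = 0 ↔ Fintype.linearCombination ℤ t v = 0)) :
    Preforms (Multiplicative M) (Multiplicative N) := by
  refine ⟨k, ofAdd ∘ t, (Subgroup.closure_range_eq_top_iff_span _).mpr ht, fun R => ?_⟩
  obtain ⟨s, hs, hst⟩ := h R
  refine ⟨ofAdd ∘ s, (Subgroup.closure_range_eq_top_iff_span _).mpr hs, fun w hw => ?_⟩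
  rw [lift_eq_one_iff, lift_eq_one_iff]
  exact hst _ fun i => (abs_exponentSum_le_norm w i).trans (by exact_mod_cast hw)

theorem Int.eq_zero_of_sum_mul_pow_eq_zero {N : ℤ} :
    ∀ {n : ℕ} (g : Fin n → ℤ), (∀ i, |g i| < N) →
      ∑ i, g i * N ^ (i : ℕ) = 0 → g = 0
  | 0, g, _, _ => Subsingleton.elim g 0
  | n + 1, g, hg, hsum => by
    have hsplit : g 0 + N * ∑ i : Fin n, g i.succ * N ^ (i : ℕ) = 0 := by
      rw [Fin.sum_univ_succ] at hsum
      simpa [Finset.mul_sum, pow_succ, mul_assoc, mul_comm, mul_left_comm] using hsum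
    have hg0 : g 0 = 0 :=
      Int.eq_zero_of_abs_lt_dvd ⟨-∑ i : Fin n, g i.succ * N ^ (i : ℕ), by linarith⟩ (hg 0)
    have hN : N ≠ 0 := by linarith [abs_nonneg (g 0), hg 0]
    have htail : g ∘ Fin.succ = 0 :=
      Int.eq_zero_of_sum_mul_pow_eq_zero _ (fun i => hg i.succ) <| by simpa [hg0, hN] using hsplit
    funext i
    cases i using Fin.cases with
    | zero => exact hg0
    | succ i => exact congrFun htail i

def packingTuple (m n : ℕ) (N : ℤ) : Fin n → Fin m → ℤ :=
  fun i a => if (a : ℕ) = 0 then N ^ (i : ℕ) else if (a : ℕ) = i then 1 else 0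

theorem span_range_packingTuple {m n : ℕ} (hmn : m ≤ n) (N : ℤ) :
    Submodule.span ℤ (Set.range (packingTuple m n N)) = ⊤ := by
  rw [eq_top_iff, ← (Pi.basisFun ℤ (Fin m)).span_eq, Submodule.span_le]
  rintro _ ⟨a, rfl⟩
  rw [Pi.basisFun_apply, SetLike.mem_coe]
  have hmem : ∀ i, packingTuple m n N i ∈ Submodule.span ℤ (Set.range (packingTuple m n N)) :=
    fun i => Submodule.subset_span ⟨i, rfl⟩
  by_cases ha : (a : ℕ) = 0
  · convert hmem ⟨0, by omega⟩ using 1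
    ext b
    simp [packingTuple, Pi.single_apply, Fin.ext_iff, ha]
  · convert Submodule.sub_mem _ (hmem (Fin.castLE hmn a))
      (Submodule.smul_mem _ (N ^ (a : ℕ)) (hmem ⟨0, by omega⟩)) using 1
    ext b
    simp only [packingTuple, Pi.single_apply, Fin.ext_iff, Pi.sub_apply, Pi.smul_apply,
      smul_eq_mul]
    split_ifs <;> simp_all

theorem linearCombination_packingTuple_apply_zero {m n : ℕ} (hm : 0 < m) (N : ℤ)
    (v : Fin n → ℤ) :
    Fintype.linearCombination ℤ (packingTuple m n N) v ⟨0, hm⟩ =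
      ∑ i, v i * N ^ (i : ℕ) := by
  simp [Fintype.linearCombination_apply, packingTuple]

theorem preforms_pi_of_le {m n : ℕ} (hm : 0 < m) (hmn : m ≤ n) :
    Preforms (Multiplicative (Fin m → ℤ)) (Multiplicative (Fin n → ℤ)) := by
  refine preforms_of_forall_abs_le _ (Pi.basisFun ℤ (Fin n)).span_eq fun R =>
    ⟨packingTuple m n (R + 1), span_range_packingTuple hmn _, fun v hv => ?_⟩
  have hbasis : Fintype.linearCombination ℤ (Pi.basisFun ℤ (Fin n)) v = v := by
    ext i
    simp [Fintype.linearCombination_apply, Pi.single_apply]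
  rw [hbasis]
  refine ⟨fun h => Int.eq_zero_of_sum_mul_pow_eq_zero (N := R + 1) v
    (fun i => by linarith [hv i]) ?_, fun h => h ▸ map_zero _⟩
  rw [← linearCombination_packingTuple_apply_zero hm, h, Pi.zero_apply]

theorem zpow_preforms_zpow_iff_general (m n : ℕ) (hm : 1 ≤ m) :
    Preforms (Fin m → Multiplicative ℤ) (Fin n → Multiplicative ℤ) ↔ m ≤ n := by
  rw [preforms_congr (MulEquiv.funMultiplicative _ _).symm (MulEquiv.funMultiplicative _ _).symm]
  refine ⟨fun h => ?_, preforms_pi_of_le hm⟩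
  simpa using h.rank_le

/-- `ℤ^m ⊑ ℤ^n` if and only if `m ≤ n`. -/
theorem zpow_preforms_zpow_iff (m n : ℕ) (hm : 1 ≤ m) (hn : 1 ≤ n) :
    Preforms (Fin m → Multiplicative ℤ) (Fin n → Multiplicative ℤ) ↔ m ≤ n :=
  zpow_preforms_zpow_iff_general m n hm
end

section
/- Let F_m and F_n denote the free groups on Fin m and Fin n respectively. If 2 ≤ m ≤ n then F_m ⊑ F_n; conversely, for all m, n ≥ 1, if F_m ⊑ F_n then m ≤ n. -/
open SemidirectProduct

namespace FreeGroup

variable {J J' : Type*}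

def shift (J : Type*) : Multiplicative ℤ →* MulAut (FreeGroup (ℤ × J)) where
  toFun k := freeGroupCongr ((Equiv.addRight k.toAdd).prodCongr (Equiv.refl J))
  map_one' := by
    change _ = MulEquiv.refl _
    rw [← freeGroupCongr_refl]
    congr
    ext <;> simp
  map_mul' k l := by
    rw [MulAut.mul_def, freeGroupCongr_trans]
    congr 1
    ext <;> simp only [Equiv.prodCongr_apply, Equiv.trans_apply, Prod.map_fst, Prod.map_snd,
      Equiv.coe_addRight, toAdd_mul, Equiv.refl_apply]; ring

@[simp]
theorem shift_of (k : Multiplicative ℤ) (p : ℤ × J) :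
    shift J k (of p) = of (p.1 + k.toAdd, p.2) := rfl

def toSemidirect : FreeGroup (Option J) →* FreeGroup (ℤ × J) ⋊[shift J] Multiplicative ℤ :=
  lift fun x => x.elim (inr (.ofAdd 1)) fun j => inl (of (0, j))

def ofSemidirect : FreeGroup (ℤ × J) ⋊[shift J] Multiplicative ℤ →* FreeGroup (Option J) :=
  SemidirectProduct.lift (lift fun p => of none ^ p.1 * of (some p.2) * (of none ^ p.1)⁻¹)
    (zpowersHom _ (of none)) fun k => by
      ext p
      simp only [MulEquiv.toMonoidHom_eq_coe, MonoidHom.coe_comp, MonoidHom.coe_coe,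
        Function.comp_apply, shift_of, lift_apply_of, zpow_add, zpowersHom_apply, MulAut.conj_apply]
      group

theorem ofSemidirect_comp_toSemidirect :
    (ofSemidirect (J := J)).comp toSemidirect = MonoidHom.id _ := by
  ext (_ | j) <;> simp [toSemidirect, ofSemidirect]

theorem toSemidirect_injective : Function.Injective (toSemidirect (J := J)) :=
  Function.LeftInverse.injective (g := ofSemidirect)
    (DFunLike.congr_fun ofSemidirect_comp_toSemidirect)

def shiftBall (J : Type*) (R : ℕ) : Subgroup (FreeGroup (ℤ × J)) :=
  Subgroup.closure (of '' {p | p.1.natAbs ≤ R})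

theorem shiftBall_mono {R R' : ℕ} (h : R ≤ R') : shiftBall J R ≤ shiftBall J R' :=
  Subgroup.closure_mono <| Set.image_mono fun _ hp => le_trans hp h

theorem shift_mem_shiftBall {R : ℕ} {x : FreeGroup (ℤ × J)} (hx : x ∈ shiftBall J R)
    (k : Multiplicative ℤ) : shift J k x ∈ shiftBall J (R + k.toAdd.natAbs) := by
  suffices shiftBall J R ≤ (shiftBall J (R + k.toAdd.natAbs)).comap (shift J k).toMonoidHom from
    this hx
  refine Subgroup.closure_le _ |>.mpr ?_
  rintro _ ⟨p, hp, rfl⟩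
  refine Subgroup.subset_closure ⟨_, ?_, (shift_of k p).symm⟩
  exact (Int.natAbs_add_le _ _).trans (Nat.add_le_add_right hp _)

theorem toSemidirect_mk_singleton (l : Option J × Bool) :
    (toSemidirect (mk [l])).left ∈ shiftBall J 0 ∧
      (toSemidirect (mk [l])).right.toAdd.natAbs ≤ 1 := by
  obtain ⟨_ | j, _ | _⟩ := l <;>
    simp [toSemidirect, shiftBall, inv_mem_iff] <;> exact Subgroup.subset_closure ⟨_, rfl, rfl⟩

theorem toSemidirect_mk_left_mem (L : List (Option J × Bool)) :
    (toSemidirect (mk L)).left ∈ shiftBall J L.length := by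
  induction L with
  | nil => exact Subgroup.one_mem _
  | cons l L ih =>
    obtain ⟨hl, hr⟩ := toSemidirect_mk_singleton l
    rw [← List.singleton_append, ← mul_mk, _root_.map_mul, mul_left]
    have hlen : L.length + (toSemidirect (mk [l])).right.toAdd.natAbs ≤ ([l] ++ L).length := by
      simp only [List.singleton_append, List.length_cons]; omega
    exact Subgroup.mul_mem _ (shiftBall_mono (by omega) hl)
      (shiftBall_mono hlen (shift_mem_shiftBall ih _))

theorem injOn_map_shiftBall {g : ℤ × J → ℤ × J'} {R : ℕ}
    (hg : Set.InjOn g {p | p.1.natAbs ≤ R}) : Set.InjOn (map g) (shiftBall J R) := by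
  have hrange :
      shiftBall J R = (map (Subtype.val : {p : ℤ × J // p.1.natAbs ≤ R} → _)).range := by
    rw [range_map, Subtype.range_coe_subtype]; rfl
  rw [hrange]
  rintro _ ⟨x, rfl⟩ _ ⟨y, rfl⟩ hxy
  rw [map.comp, map.comp] at hxy
  rw [map_injective (Set.injOn_iff_injective.mp hg) hxy]

def conjLift (f : J → J') (c : J → ℤ) : FreeGroup (Option J) →* FreeGroup (Option J') :=
  lift fun x => x.elim (of none) fun j => of none ^ c j * of (some (f j)) * (of none ^ c j)⁻¹

theorem conjLift_surjective {f : J → J'} (hf : Function.Surjective f) (c : J → ℤ) :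
    Function.Surjective (conjLift f c) := by
  rw [← MonoidHom.range_eq_top, eq_top_iff, ← closure_range_of, Subgroup.closure_le]
  rintro _ ⟨_ | j', rfl⟩
  · exact ⟨of none, by simp [conjLift]⟩
  · obtain ⟨j, rfl⟩ := hf j'
    exact ⟨(of none ^ c j)⁻¹ * of (some j) * of none ^ c j, by
      simp only [conjLift, _root_.map_mul, _root_.map_inv, map_zpow, lift_apply_of,
        Option.elim_none, Option.elim_some]
      group⟩

def shiftConjMap (f : J → J') (c : J → ℤ) :
    FreeGroup (ℤ × J) ⋊[shift J] Multiplicative ℤ →*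
      FreeGroup (ℤ × J') ⋊[shift J'] Multiplicative ℤ :=
  SemidirectProduct.map (map fun p => (p.1 + c p.2, f p.2)) (MonoidHom.id _) fun k => by
    ext p
    simp only [MonoidHom.comp_apply, MulEquiv.coe_toMonoidHom, shift_of, map.of,
      MonoidHom.id_apply]
    congr 2
    ring

theorem toSemidirect_comp_conjLift (f : J → J') (c : J → ℤ) :
    toSemidirect.comp (conjLift f c) = (shiftConjMap f c).comp toSemidirect := by
  refine ext_hom _ _ fun x => ?_
  rcases x with _ | j
  · simp [toSemidirect, conjLift, shiftConjMap]
  · simp only [toSemidirect, conjLift, MonoidHom.coe_comp, Function.comp_apply, lift_apply_of,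
      Option.elim_some, Option.elim_none, _root_.map_mul, map_zpow, _root_.map_inv, shiftConjMap,
      map_inl, map.of, zero_add]
    rw [← _root_.map_zpow, ← _root_.map_inv, ← inl_aut, shift_of]
    simp

theorem eq_one_of_conjLift_eq_one [DecidableEq J] {f : J → J'} {c : J → ℤ} {R : ℕ}
    (hinj : Set.InjOn (fun p : ℤ × J => (p.1 + c p.2, f p.2)) {p | p.1.natAbs ≤ R})
    {w : FreeGroup (Option J)} (hw : w.norm ≤ R) (h : conjLift f c w = 1) : w = 1 := by
  have hleft : (toSemidirect w).left ∈ shiftBall J R := by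
    have := toSemidirect_mk_left_mem w.toWord
    rw [mk_toWord] at this
    exact shiftBall_mono hw this
  have hmap : shiftConjMap f c (toSemidirect w) = 1 := by
    rw [← MonoidHom.comp_apply, ← toSemidirect_comp_conjLift, MonoidHom.comp_apply, h,
      _root_.map_one]
  refine toSemidirect_injective (SemidirectProduct.ext ?_ ?_) <;> rw [_root_.map_one]
  · exact injOn_map_shiftBall hinj hleft (Subgroup.one_mem _) (congrArg left hmap)
  · exact congrArg (·.right) hmap

end FreeGroup

open FreeGroup

theorem preforms_freeGroup_of_forall_exists {G : Type*} [Group G] {k : ℕ}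
    (h : ∀ R : ℕ, ∃ φ : FreeGroup (Fin k) →* G, Function.Surjective φ ∧
      ∀ w, w.norm ≤ R → φ w = 1 → w = 1) :
    Preforms G (FreeGroup (Fin k)) := by
  refine ⟨k, of, closure_range_of _, fun R => ?_⟩
  obtain ⟨φ, hφ, hφR⟩ := h R
  have hlift : lift (φ ∘ of) = φ := ext_hom _ _ fun _ => by simp
  refine ⟨φ ∘ of, ?_, fun w hw => ?_⟩
  · rw [← range_lift_eq_closure, hlift, MonoidHom.range_eq_top]
    exact hφ
  · rw [lift_of_eq_id, hlift, MonoidHom.id_apply]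
    exact ⟨hφR w hw, fun h => h ▸ map_one φ⟩


theorem injOn_add_mul_fin {n n' : ℕ} (f : Fin n → Fin n') (R : ℕ) :
    Set.InjOn (fun p : ℤ × Fin n => (p.1 + (2 * R + 1) * p.2, f p.2)) {p | p.1.natAbs ≤ R} := by
  rintro ⟨a, i⟩ ha ⟨b, j⟩ hb h
  obtain ⟨h₁, -⟩ := Prod.mk.inj h
  have ha' : -(R : ℤ) ≤ a ∧ a ≤ R := by simp only [Set.mem_ofPred_eq] at ha; omega
  have hb' : -(R : ℤ) ≤ b ∧ b ≤ R := by simp only [Set.mem_ofPred_eq] at hb; omega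
  have hij : (i : ℤ) = j := by
    rcases lt_trichotomy (i : ℤ) j with hlt | heq | hgt
    · nlinarith
    · exact heq
    · nlinarith
  have : i = j := Fin.ext (by exact_mod_cast hij)
  subst this
  simp only [Prod.mk.injEq, and_true]
  linarith

theorem preforms_freeGroup_fin_succ {m n : ℕ} (hm : 1 ≤ m) (hmn : m ≤ n) :
    Preforms (FreeGroup (Fin (m + 1))) (FreeGroup (Fin (n + 1))) := by
  have : Nonempty (Fin m) := ⟨⟨0, hm⟩⟩
  refine preforms_freeGroup_of_forall_exists fun R => ?_
  have hf := Function.invFun_surjective (Fin.castLE_injective hmn)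
  set f : Fin n → Fin m := Function.invFun (Fin.castLE hmn)
  set eₙ := freeGroupCongr (finSuccEquiv n)
  set eₘ := freeGroupCongr (finSuccEquiv m)
  refine ⟨eₘ.symm.toMonoidHom.comp ((conjLift f fun j => (2 * R + 1) * j).comp eₙ.toMonoidHom),
    eₘ.symm.surjective.comp ((conjLift_surjective hf _).comp eₙ.surjective), fun w hw h => ?_⟩
  have hnorm : (eₙ w).norm ≤ R := by
    rw [← mk_toWord (x := w), freeGroupCongr_apply, map.mk]
    exact norm_mk_le.trans ((List.length_map _).trans_le hw)
  have := eq_one_of_conjLift_eq_one (injOn_add_mul_fin f R) hnorm (by simpa using h)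
  simpa using this

theorem Preforms.exists_surjective {G X : Type*} [Group G] (h : Preforms G (FreeGroup X)) :
    ∃ ψ : FreeGroup X →* G, Function.Surjective ψ := by
  obtain ⟨k, t, ht, hlocal⟩ := h
  have hsurj : Function.Surjective (lift t) := by
    rw [← MonoidHom.range_eq_top, range_lift_eq_closure, ht]
  choose v hv using fun x => hsurj (of x)
  have hsection : (lift t).comp (lift v) = MonoidHom.id _ := ext_hom _ _ fun x => by simp [hv]
  let relator (i : Fin k) : FreeGroup (Fin k) := (lift v (t i))⁻¹ * of i
  obtain ⟨s, hs, hrel⟩ := hlocal (Finset.univ.sup fun i => (relator i).norm)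
  have hst (i : Fin k) : lift s (lift v (t i)) = s i := by
    have hR := Finset.le_sup (f := fun i => (relator i).norm) (Finset.mem_univ i)
    have := (hrel (relator i) hR).mpr <| by simp [relator, ← MonoidHom.comp_apply, hsection]
    simpa [relator, inv_mul_eq_one] using this
  refine ⟨(lift s).comp (lift v), ?_⟩
  rw [← MonoidHom.range_eq_top, eq_top_iff, ← hs, Subgroup.closure_le]
  rintro _ ⟨i, rfl⟩
  exact ⟨t i, hst i⟩

theorem FreeGroup.card_le_card_of_surjective {α β : Type*} [Fintype α] [Fintype β]
    {ψ : FreeGroup α →* FreeGroup β} (hψ : Function.Surjective ψ) :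
    Fintype.card β ≤ Fintype.card α := by
  let f : FreeAbelianGroup α →ₗ[ℤ] FreeAbelianGroup β :=
    (MonoidHom.toAdditive (Abelianization.map ψ)).toIntLinearMap
  have hf : Function.Surjective f := by
    intro y
    obtain ⟨x, hx⟩ := QuotientGroup.mk_surjective y.toMul
    obtain ⟨z, rfl⟩ := hψ x
    exact ⟨.ofMul (Abelianization.of z), hx⟩
  have := Module.Finite.of_basis (FreeAbelianGroup.basis α)
  simpa [Module.finrank_eq_card_basis (FreeAbelianGroup.basis _)] using
    LinearMap.finrank_le_finrank_of_surjective hf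

/-- If `2 ≤ m ≤ n` then `F_m ⊑ F_n`; conversely, for `m, n ≥ 1`, if `F_m ⊑ F_n` then
`m ≤ n`. -/
theorem free_preforms_free (m n : ℕ) :
    (2 ≤ m → m ≤ n → Preforms (FreeGroup (Fin m)) (FreeGroup (Fin n))) ∧
    (1 ≤ m → 1 ≤ n → Preforms (FreeGroup (Fin m)) (FreeGroup (Fin n)) → m ≤ n) := by
  refine ⟨fun hm hmn => ?_, fun _ _ h => ?_⟩
  · obtain ⟨m, rfl⟩ : ∃ m', m = m' + 1 := ⟨m - 1, by omega⟩
    obtain ⟨n, rfl⟩ : ∃ n', n = n' + 1 := ⟨n - 1, by omega⟩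
    exact preforms_freeGroup_fin_succ (by omega) (by omega)
  · obtain ⟨ψ, hψ⟩ := h.exists_surjective
    simpa using FreeGroup.card_le_card_of_surjective hψ
end

section
/- Let G be a group generated by s elements (i.e., admitting a generating tuple Fin s → G), and suppose there exists a surjective group homomorphism from G onto the free group F_m with m ≥ 2. Then G preforms the free group F_{m+s} on m + s generators. -/
/-!
Choose a homomorphism `θ : F_m → G` with `f ∘ θ = id` and two basis letters `x ≠ y` of `F_m`.
For a radius `R`, send the new letters `z_j` to `c_j = y^{(R+1)(j+1)} x y^{(R+1)(j+1)}`.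
Replacing each generator `g_j` of `G` by `g_j θ(f(g_j)⁻¹ c_j)` and adding `θ` of the basis of
`F_m` gives a generating `(m+s)`-tuple of `G` whose image under `f` is `(basis, c_0, …)`, so it
suffices that no nontrivial word of length `≤ R` in the basis and the `z_j` dies in `F_m`.
In the reduced form of its image the letter `x` of every `c_j` survives: a `y`-run of length
`≤ R` cannot cancel `y^{±(R+1)(j+1)}`, and two such powers cancel each other only when they
come from adjacent letters `z_j^{±1} z_j^{∓1}`, which reducedness excludes.
-/

open Function FreeGroup Set

namespace FreeGroup

def boolSign (b : Bool) : ℤ := cond b 1 (-1)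

variable {α β : Type*}

theorem mk_singleton (a : α) (b : Bool) : mk [(a, b)] = of a ^ boolSign b := by
  cases b
  · rw [boolSign, cond_false, zpow_neg_one, of, inv_mk]
    rfl
  · exact (zpow_one _).symm

theorem mk_cons (p : α × Bool) (L : List (α × Bool)) :
    mk (p :: L) = of p.1 ^ boolSign p.2 * mk L := by
  rw [← mk_singleton, mul_mk]
  rfl

theorem lift_mk_cons {G : Type*} [Group G] (t : α → G) (p : α × Bool) (L : List (α × Bool)) :
    lift t (mk (p :: L)) = t p.1 ^ boolSign p.2 * lift t (mk L) := by
  rw [mk_cons, _root_.map_mul, map_zpow, lift_apply_of]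

theorem isReduced_cons {p : α × Bool} {L : List (α × Bool)} :
    IsReduced (p :: L) ↔ (∀ c ∈ L.head?, p.1 = c.1 → p.2 = c.2) ∧ IsReduced L :=
  List.isChain_cons

def powWord (a : α) (t : ℤ) : List (α × Bool) :=
  List.replicate t.natAbs (a, decide (0 ≤ t))

theorem mk_powWord (a : α) (t : ℤ) : mk (powWord a t) = of a ^ t := by
  rw [powWord, ← List.flatten_replicate_singleton, ← pow_mk, mk_singleton, ← zpow_natCast,
    ← zpow_mul]
  congr 1
  by_cases h : 0 ≤ t <;> simp [h, boolSign, abs_of_neg, not_le.1]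

theorem powWord_eq_nil_iff {a : α} {t : ℤ} : powWord a t = [] ↔ t = 0 := by
  simp [powWord]

theorem head?_powWord_append {a : α} {t : ℤ} (ht : t ≠ 0) (L : List (α × Bool)) :
    (powWord a t ++ L).head? = some (a, decide (0 ≤ t)) := by
  obtain ⟨n, hn⟩ := Nat.exists_eq_succ_of_ne_zero (Int.natAbs_ne_zero.2 ht)
  rw [powWord, hn, List.replicate_succ, List.cons_append, List.head?_cons]

theorem isReduced_powWord_append {a : α} {t : ℤ} {L : List (α × Bool)} (hL : IsReduced L)
    (ha : ∀ c ∈ L.head?, c.1 ≠ a) : IsReduced (powWord a t ++ L) := by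
  refine List.isChain_append.2 ⟨List.isChain_replicate_of_rel _ fun _ => rfl, hL, ?_⟩
  intro p hp c hc hpc
  rw [List.eq_of_mem_replicate (List.mem_of_mem_getLast? hp)] at hpc
  exact absurd hpc.symm (ha c hc)

theorem exists_rightInverse_of_surjective {G : Type*} [Group G] (f : G →* FreeGroup α)
    (hf : Surjective f) : ∃ θ : FreeGroup α →* G, ∀ q, f (θ q) = q := by
  refine ⟨lift (surjInv hf ∘ of), fun q => ?_⟩
  rw [← MonoidHom.comp_apply, ext_hom (f.comp _) (MonoidHom.id _) fun a => by
    simp [surjInv_eq hf], MonoidHom.id_apply]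

variable [DecidableEq α] [DecidableEq β]

theorem IsReduced.toWord_mk {L : List (α × Bool)} (h : IsReduced L) : toWord (mk L) = L := by
  rw [FreeGroup.toWord_mk, h.reduce_eq]

theorem toWord_map_of_injective {f : α → β} (hf : Injective f) (w : FreeGroup α) :
    toWord (map f w) = (toWord w).map fun p => (f p.1, p.2) := by
  conv_lhs => rw [← mk_toWord (x := w)]
  rw [map.mk]
  exact IsReduced.toWord_mk
    ((List.isChain_map _).2 (isReduced_toWord.imp fun _ _ h hab => h (hf hab)))

theorem isReduced_of_toWord_eq_append {w : FreeGroup α} {L₁ L₂ : List (α × Bool)}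
    (h : toWord w = L₁ ++ L₂) : IsReduced L₂ :=
  isReduced_toWord.infix (h ▸ (List.suffix_append _ _).isInfix)

theorem eq_zpow_mul_mk_of_toWord_eq {w : FreeGroup α} {a : α} {t : ℤ} {L : List (α × Bool)}
    (h : toWord w = powWord a t ++ L) : w = of a ^ t * mk L := by
  rw [← mk_toWord (x := w), h, ← mul_mk, mk_powWord]

theorem toWord_zpow_mul_mk {a : α} {t : ℤ} {L : List (α × Bool)} (hL : IsReduced L)
    (ha : ∀ c ∈ L.head?, c.1 ≠ a) : toWord (of a ^ t * mk L) = powWord a t ++ L := by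
  rw [← mk_powWord, mul_mk, (isReduced_powWord_append hL ha).toWord_mk]

end FreeGroup

def FaithfulOnBall {ι H : Type*} [DecidableEq ι] [Group H] (t : ι → H) (R : ℕ) : Prop :=
  ∀ w : FreeGroup ι, w.toWord.length ≤ R → lift t w = 1 → w = 1

namespace FaithfulOnBall

variable {ι κ G H : Type*} [DecidableEq ι] [Group G] [Group H] {R : ℕ}

theorem of_comp (f : G →* H) {t : ι → G} (h : FaithfulOnBall (f ∘ t) R) :
    FaithfulOnBall t R := fun w hw h1 =>
  h w hw (by
    rw [← lift_unique (f.comp (lift t)) (by simp), MonoidHom.comp_apply, h1, _root_.map_one])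

theorem comp_injective [DecidableEq κ] {t : κ → H} (h : FaithfulOnBall t R) {ρ : ι → κ}
    (hρ : Injective ρ) : FaithfulOnBall (t ∘ ρ) R := by
  intro w hw h1
  rw [← lift_unique ((lift t).comp (map ρ)) (by simp)] at h1
  refine map_injective hρ ((h (map ρ w) ?_ h1).trans (map ρ).map_one.symm)
  rwa [toWord_map_of_injective hρ, List.length_map]

end FaithfulOnBall

theorem preforms_freeGroup_of_faithfulOnBall {G : Type*} [Group G] {k : ℕ}
    (h : ∀ R, ∃ t : Fin k → G, Subgroup.closure (range t) = ⊤ ∧ FaithfulOnBall t R) :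
    Preforms G (FreeGroup (Fin k)) := by
  refine ⟨k, of, closure_range_of _, fun R => ?_⟩
  obtain ⟨t, ht, hfaith⟩ := h R
  refine ⟨t, ht, fun w hw => ?_⟩
  rw [lift_of_apply]
  exact ⟨hfaith w hw, fun hw1 => by rw [hw1, _root_.map_one]⟩

theorem exists_closure_range_eq_top_comp_eq_sum_elim {G Q ι κ : Type*} [Group G] [Group Q]
    (f : G →* Q) (θ : Q →* G) (hθ : ∀ q, f (θ q) = q) {g : ι → G}
    (hg : Subgroup.closure (range g) = ⊤) {u : κ → Q} (hu : Subgroup.closure (range u) = ⊤)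
    (v : ι → Q) :
    ∃ γ : κ ⊕ ι → G, Subgroup.closure (range γ) = ⊤ ∧ f ∘ γ = Sum.elim u v := by
  set γ : κ ⊕ ι → G := Sum.elim (θ ∘ u) fun i => g i * θ ((f (g i))⁻¹ * v i)
  have hθγ : ∀ q, θ q ∈ Subgroup.closure (range γ) := by
    intro q
    have hq : θ q ∈ (Subgroup.closure (range u)).map θ :=
      hu ▸ Subgroup.mem_map_of_mem θ (Subgroup.mem_top q)
    rw [MonoidHom.map_closure, ← range_comp] at hq
    exact Subgroup.closure_mono (range_comp_subset_range Sum.inl γ) hq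
  refine ⟨γ, eq_top_iff.2 (hg ▸ (Subgroup.closure_le _).2 ?_), funext ?_⟩
  · rintro _ ⟨i, rfl⟩
    have hgi : g i = γ (.inr i) * (θ ((f (g i))⁻¹ * v i))⁻¹ := by
      simp only [γ, Sum.elim_inr, mul_inv_cancel_right]
    rw [SetLike.mem_coe, hgi]
    exact mul_mem (Subgroup.subset_closure (mem_range_self _)) (inv_mem (hθγ _))
  · rintro (k | i) <;> simp [γ, hθ]

namespace BigPowers

variable {α : Type*} (x y : α) (R : ℕ)

def bigPowerTuple : α ⊕ ℕ → FreeGroup α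
  | .inl a => of a
  | .inr j => of y ^ ((R + 1) * (j + 1) : ℤ) * of x * of y ^ ((R + 1) * (j + 1) : ℤ)

def leadBlockCoeff : List ((α ⊕ ℕ) × Bool) → ℤ
  | (.inr j, b) :: _ => boolSign b * (j + 1)
  | _ => 0

def headLetter : (α ⊕ ℕ) × Bool → α × Bool
  | (.inl a, b) => (a, b)
  | (.inr _, b) => (x, b)

def ImageNormalForm [DecidableEq α] (L : List ((α ⊕ ℕ) × Bool)) : Prop :=
  ∃ (k : ℕ) (ε : Bool) (L' tail : List _),
    L = List.replicate k (.inl y, ε) ++ L' ∧ (∀ c ∈ tail.head?, c.1 ≠ y) ∧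
    toWord (lift (bigPowerTuple x y R) (mk L)) =
      powWord y (boolSign ε * k + (R + 1) * leadBlockCoeff L') ++ tail ∧
    tail.head? = L'.head?.map (headLetter x)

variable {x y R}

theorem bigPowerTuple_inr_zpow (j : ℕ) (b : Bool) :
    bigPowerTuple x y R (.inr j) ^ boolSign b =
      of y ^ ((R + 1) * (boolSign b * (j + 1))) * of x ^ boolSign b *
        of y ^ ((R + 1) * (boolSign b * (j + 1))) := by
  cases b
  · simp [bigPowerTuple, boolSign]
    group
  · simp [bigPowerTuple, boolSign]

theorem eq_zero_of_boolSign_mul_add_mul_eq_zero {k : ℕ} (hk : k ≤ R) {ε : Bool} {c : ℤ}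
    (h : boolSign ε * k + (R + 1) * c = 0) : k = 0 ∧ c = 0 := by
  have hc : c = 0 := by
    rcases lt_trichotomy c 0 with hc | hc | hc <;> cases ε <;> simp [boolSign] at h <;> nlinarith
  subst hc
  cases ε <;> simp [boolSign] at h <;> omega

theorem leadBlockCoeff_eq_zero {L : List ((α ⊕ ℕ) × Bool)} (h : leadBlockCoeff L = 0) :
    ∀ c ∈ L.head?, ∃ a, c = (.inl a, c.2) := by
  rcases L with _ | ⟨⟨a | j, b⟩, L⟩
  · simp
  · simp
  · cases b <;> simp [leadBlockCoeff, boolSign] at h <;> omega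

variable [DecidableEq α]

theorem ImageNormalForm.cons_y {L : List ((α ⊕ ℕ) × Bool)} {b : Bool}
    (h : ImageNormalForm x y R L) (hred : IsReduced ((.inl y, b) :: L)) :
    ImageNormalForm x y R ((.inl y, b) :: L) := by
  obtain ⟨k, ε, L', tail, rfl, hy, hW, htail⟩ := h
  have hεb : k = 0 ∨ ε = b := by
    rcases k with _ | k
    · exact .inl rfl
    · rw [List.replicate_succ, List.cons_append, isReduced_cons_cons] at hred
      exact .inr (hred.1 rfl).symm
  have hrep : List.replicate k ((.inl y, ε) : (α ⊕ ℕ) × Bool) = .replicate k (.inl y, b) ∧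
      boolSign ε * k = boolSign b * k := by
    rcases hεb with rfl | rfl <;> simp
  refine ⟨k + 1, b, L', tail, by rw [hrep.1]; rfl, hy, ?_, htail⟩
  rw [lift_mk_cons, eq_zpow_mul_mk_of_toWord_eq hW, bigPowerTuple, ← mul_assoc, ← zpow_add,
    toWord_zpow_mul_mk (isReduced_of_toWord_eq_append hW) hy]
  congr 2
  push_cast
  linarith [hrep.2]

theorem ImageNormalForm.cons_inl {L : List ((α ⊕ ℕ) × Bool)} {a : α} (ha : a ≠ y) {b : Bool}
    (h : ImageNormalForm x y R L) (hred : IsReduced ((.inl a, b) :: L)) (hlen : L.length ≤ R) :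
    ImageNormalForm x y R ((.inl a, b) :: L) := by
  obtain ⟨k, ε, L', tail, rfl, hy, hW, htail⟩ := h
  set W := toWord (lift (bigPowerTuple x y R) (mk (.replicate k (.inl y, ε) ++ L'))) with hWdef
  have hred' : IsReduced ((a, b) :: W) := by
    refine isReduced_cons.2 ⟨?_, isReduced_toWord⟩
    rw [hW]
    rcases eq_or_ne (boolSign ε * k + (R + 1) * leadBlockCoeff L') 0 with ht | ht
    -- a vanishing `y`-exponent forces `L` to start with a letter `.inl a'`
    · obtain ⟨rfl, hC⟩ := eq_zero_of_boolSign_mul_add_mul_eq_zero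
        (by simp at hlen; omega) ht
      rw [ht, powWord_eq_nil_iff.2 rfl, List.nil_append, htail]
      intro c hc
      obtain ⟨d, hd, rfl⟩ := Option.mem_map.1 hc
      obtain ⟨a', hd'⟩ := leadBlockCoeff_eq_zero hC d hd
      have := (isReduced_cons.1 hred).1 d (by simpa using hd)
      rw [hd'] at this ⊢
      simpa [headLetter] using this
    · rw [head?_powWord_append ht]
      simpa using fun h => absurd h ha
  refine ⟨0, true, (.inl a, b) :: (.replicate k (.inl y, ε) ++ L'), (a, b) :: W, rfl,
    by simpa using ha, ?_, rfl⟩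
  rw [lift_mk_cons, ← mk_toWord (x := lift _ (mk _)), ← hWdef, bigPowerTuple, ← mk_singleton,
    mul_mk, List.singleton_append, hred'.toWord_mk]
  simp [leadBlockCoeff, powWord]

theorem ImageNormalForm.cons_inr (hxy : x ≠ y) {L : List ((α ⊕ ℕ) × Bool)} {j : ℕ} {b : Bool}
    (h : ImageNormalForm x y R L) (hred : IsReduced ((.inr j, b) :: L)) (hlen : L.length ≤ R) :
    ImageNormalForm x y R ((.inr j, b) :: L) := by
  obtain ⟨k, ε, L', tail, rfl, hy, hW, htail⟩ := h
  set e : ℤ := (R + 1) * (boolSign b * (j + 1))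
  set t : ℤ := boolSign ε * k + (R + 1) * leadBlockCoeff L'
  -- otherwise `L` would start with the inverse letter `(.inr j, !b)`
  have het : e + t ≠ 0 := by
    intro h0
    obtain ⟨rfl, hC⟩ := eq_zero_of_boolSign_mul_add_mul_eq_zero (R := R) (k := k) (ε := ε)
      (c := boolSign b * (j + 1) + leadBlockCoeff L') (by simp at hlen; omega)
      (by linear_combination h0)
    rcases L' with _ | ⟨⟨a' | j', b'⟩, L''⟩
    · cases b <;> simp [leadBlockCoeff, boolSign] at hC <;> omega
    · cases b <;> simp [leadBlockCoeff, boolSign] at hC <;> omega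
    · have := (isReduced_cons.1 hred).1 _ rfl
      cases b <;> cases b' <;> simp [leadBlockCoeff, boolSign] at hC this <;> omega
  have hred' : IsReduced ((x, b) :: (powWord y (e + t) ++ tail)) := by
    refine isReduced_cons.2
      ⟨?_, isReduced_powWord_append (isReduced_of_toWord_eq_append hW) hy⟩
    rw [head?_powWord_append het]
    simpa using fun h => absurd h hxy
  refine ⟨0, true, (.inr j, b) :: (.replicate k (.inl y, ε) ++ L'),
    (x, b) :: (powWord y (e + t) ++ tail), rfl, by simpa using hxy, ?_, rfl⟩
  rw [lift_mk_cons, bigPowerTuple_inr_zpow, eq_zpow_mul_mk_of_toWord_eq hW]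
  have : of y ^ e * of x ^ boolSign b * of y ^ e * (of y ^ t * mk tail) =
      of y ^ e * mk ((x, b) :: (powWord y (e + t) ++ tail)) := by
    rw [mk_cons, ← mul_mk, mk_powWord, zpow_add (of y) e t]
    simp only [mul_assoc]
  rw [this, toWord_zpow_mul_mk hred' (by simpa using hxy)]
  simp [leadBlockCoeff, e]

theorem imageNormalForm_of_isReduced (hxy : x ≠ y) {L : List ((α ⊕ ℕ) × Bool)}
    (hL : IsReduced L) (hlen : L.length ≤ R) : ImageNormalForm x y R L := by
  induction L with
  | nil => exact ⟨0, true, [], [], rfl, by simp, by simp [leadBlockCoeff, powWord], rfl⟩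
  | cons p L ih =>
    have hlen' : L.length ≤ R := by simp at hlen; omega
    have hL' := ih (isReduced_cons.1 hL).2 hlen'
    rcases p with ⟨a | j, b⟩
    · by_cases ha : a = y
      · subst ha
        exact hL'.cons_y hL
      · exact hL'.cons_inl ha hL hlen'
    · exact hL'.cons_inr hxy hL hlen'

theorem faithfulOnBall_bigPowerTuple (hxy : x ≠ y) (R : ℕ) :
    FaithfulOnBall (bigPowerTuple x y R) R := by
  intro w hw h1
  obtain ⟨k, ε, L', tail, hw', -, hW, htail⟩ :=
    imageNormalForm_of_isReduced hxy isReduced_toWord hw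
  rw [mk_toWord, h1, toWord_one, eq_comm, List.append_eq_nil_iff, powWord_eq_nil_iff] at hW
  obtain ⟨ht, rfl⟩ := hW
  obtain rfl : L' = [] := by simpa using htail
  obtain ⟨rfl, -⟩ := eq_zero_of_boolSign_mul_add_mul_eq_zero (by simpa [hw'] using hw) ht
  simpa [← toWord_eq_nil_iff] using hw'

end BigPowers

/-- An `s`-generated group admitting the free group `F_m` (`m ≥ 2`) as a quotient
preforms the free group on `m + s` generators. -/
theorem preforms_free_of_free_quotient
    (G : Type*) [Group G] (s m : ℕ) (hm : 2 ≤ m)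
    (hgen : ∃ g : Fin s → G, Subgroup.closure (Set.range g) = ⊤)
    (f : G →* FreeGroup (Fin m)) (hf : Function.Surjective f) :
    Preforms G (FreeGroup (Fin (m + s))) := by
  obtain ⟨g, hg⟩ := hgen
  obtain ⟨θ, hθ⟩ := exists_rightInverse_of_surjective f hf
  let x : Fin m := ⟨0, by omega⟩
  let y : Fin m := ⟨1, by omega⟩
  refine preforms_freeGroup_of_faithfulOnBall fun R => ?_
  set τ := BigPowers.bigPowerTuple x y R
  obtain ⟨γ, hγ, hfγ⟩ := exists_closure_range_eq_top_comp_eq_sum_elim f θ hθ hg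
    (closure_range_of (Fin m)) (τ ∘ Sum.inr ∘ Fin.val)
  refine ⟨γ ∘ finSumFinEquiv.symm, by rwa [finSumFinEquiv.symm.surjective.range_comp],
    FaithfulOnBall.of_comp f ?_⟩
  have hτ : Sum.elim of (τ ∘ Sum.inr ∘ Fin.val) = τ ∘ Sum.map id (Fin.val (n := s)) := by
    funext i
    rcases i with a | j <;> rfl
  rw [← comp_assoc, hfγ, hτ, comp_assoc]
  exact (BigPowers.faithfulOnBall_bigPowerTuple (by simp [x, y]) R).comp_injective
    ((Sum.map_injective.2 ⟨injective_id, Fin.val_injective⟩).comp finSumFinEquiv.symm.injective)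
end

section
/- Let G be a finitely generated group and let H be a finitely presented group, i.e., H is isomorphic to the quotient of a free group on finitely many generators by the normal closure of a finite set of relators. If G ⊑ H, then there exists a surjective group homomorphism from H onto G. -/
/-- A group is finitely presented if it is the quotient of a finitely generated free
group by the normal closure of a finite set of relators. -/
def IsFinitelyPresented (K : Type*) [Group K] : Prop :=
  ∃ (n : ℕ) (Rel : Finset (FreeGroup (Fin n))),
    Nonempty (K ≃* FreeGroup (Fin n) ⧸ Subgroup.normalClosure (Rel : Set (FreeGroup (Fin n))))

/-!
Finite presentability does not depend on the finite generating set: comparing two generating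
sets through the free group on their union, each comparison map is a retraction, and the kernel
of a retraction `r` with section `σ` is normally generated by the elements `x⁻¹ * σ (r x)`, `x`
running over generators. So the kernel of `FreeGroup (Fin k) → H` given by the generating tuple
`t` from `G ⊑ H` is the normal closure of finitely many relators. Choosing `R` above their
lengths, the corresponding tuple `s` of `G` kills these relators, hence the whole kernel, and
therefore induces a surjection `H → G`.
-/

theorem MonoidHom.ker_eq_normalClosure_of_comp_eq_id {G K : Type*} [Group G] [Group K]
    {X : Set G} (hX : Subgroup.closure X = ⊤) (r : G →* K) (σ : K →* G)
    (hσ : r.comp σ = MonoidHom.id K) :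
    r.ker = Subgroup.normalClosure ((fun x => x⁻¹ * σ (r x)) '' X) := by
  set N := Subgroup.normalClosure ((fun x => x⁻¹ * σ (r x)) '' X)
  have hrσ : ∀ y, r (σ y) = y := DFunLike.congr_fun hσ
  have hmk : (QuotientGroup.mk' N).comp (σ.comp r) = QuotientGroup.mk' N := by
    refine MonoidHom.eq_of_eqOn_dense hX fun x hx => ?_
    have hxN : x⁻¹ * σ (r x) ∈ N := Subgroup.subset_normalClosure ⟨x, hx, rfl⟩
    exact (QuotientGroup.eq.2 hxN).symm
  apply le_antisymm
  · intro w hw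
    rw [← QuotientGroup.ker_mk' N, MonoidHom.mem_ker, ← hmk, MonoidHom.comp_apply,
      MonoidHom.comp_apply, MonoidHom.mem_ker.1 hw, map_one, map_one]
  · refine Subgroup.normalClosure_le_normal ?_
    rintro _ ⟨x, -, rfl⟩
    simp [hrσ]

theorem MonoidHom.ker_isFinitelyNormallyGenerated_of_comp_eq_id {G K : Type*} [Group G]
    [Group K] [Group.FG G] (r : G →* K) (σ : K →* G) (hσ : r.comp σ = MonoidHom.id K) :
    r.ker.IsFinitelyNormallyGenerated := by
  obtain ⟨X, hX⟩ := Group.fg_def.1 ‹_›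
  exact ⟨_, X.finite_toSet.image _, (r.ker_eq_normalClosure_of_comp_eq_id hX σ hσ).symm⟩

theorem Group.IsFinitelyPresented.ker_isFinitelyNormallyGenerated {H α : Type*} [Group H]
    [Group.IsFinitelyPresented H] [Finite α] {φ : FreeGroup α →* H}
    (hφ : Function.Surjective φ) : φ.ker.IsFinitelyNormallyGenerated := by
  obtain ⟨n, ψ, hψ, hψker⟩ := ‹Group.IsFinitelyPresented H›.out
  let p : FreeGroup (α ⊕ Fin n) →* FreeGroup α :=
    FreeGroup.lift (Sum.elim FreeGroup.of fun j => Function.surjInv hφ (ψ (.of j)))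
  let q : FreeGroup (α ⊕ Fin n) →* FreeGroup (Fin n) :=
    FreeGroup.lift (Sum.elim (fun i => Function.surjInv hψ (φ (.of i))) FreeGroup.of)
  have hpq : φ.comp p = ψ.comp q := by
    ext (i | j) <;> simp [p, q, Function.surjInv_eq]
  have hp : p.comp (FreeGroup.map Sum.inl) = MonoidHom.id _ := by ext; simp [p]
  have hq : q.comp (FreeGroup.map Sum.inr) = MonoidHom.id _ := by ext; simp [q]
  have hp_surj : Function.Surjective p := fun y => ⟨_, DFunLike.congr_fun hp y⟩
  have hq_surj : Function.Surjective q := fun y => ⟨_, DFunLike.congr_fun hq y⟩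
  have hcomp : (φ.comp p).ker.IsFinitelyNormallyGenerated := by
    rw [hpq, ← MonoidHom.comap_ker]
    exact hψker.comap hq_surj (q.ker_isFinitelyNormallyGenerated_of_comp_eq_id _ hq)
  simpa only [← MonoidHom.comap_ker, Subgroup.map_comap_eq_self_of_surjective hp_surj]
    using hcomp.map hp_surj

theorem IsFinitelyPresented.group_isFinitelyPresented {H : Type*} [Group H]
    (hH : IsFinitelyPresented H) : Group.IsFinitelyPresented H := by
  obtain ⟨n, Rel, ⟨e⟩⟩ := hH
  exact .equiv (G := PresentedGroup (Rel : Set (FreeGroup (Fin n)))) e.symm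

theorem MonoidHom.exists_surjective_of_ker_le {F H G : Type*} [Group F] [Group H] [Group G]
    {φ : F →* H} (hφ : Function.Surjective φ) {f : F →* G} (hf : Function.Surjective f)
    (h : φ.ker ≤ f.ker) : ∃ g : H →* G, Function.Surjective g := by
  let g := φ.liftOfRightInverse _ (Function.rightInverse_surjInv hφ) ⟨f, h⟩
  have hg : g.comp φ = f := φ.liftOfRightInverse_comp _ _ _
  exact ⟨g, Function.Surjective.of_comp (g := φ) (by rw [← MonoidHom.coe_comp, hg]; exact hf)⟩

theorem quotient_of_preforms_finitely_presented_general
    (G H : Type*) [Group G] [Group H]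
    (hH : IsFinitelyPresented H) (hpre : Preforms G H) :
    ∃ f : H →* G, Function.Surjective f := by
  obtain ⟨k, t, ht, hst⟩ := hpre
  have := hH.group_isFinitelyPresented
  have hφ := FreeGroup.lift_surjective_iff_closure_range_eq_top.2 ht
  obtain ⟨S, hSfin, hS⟩ := Group.IsFinitelyPresented.ker_isFinitelyNormallyGenerated hφ
  obtain ⟨R, hR⟩ := (hSfin.image fun w => w.toWord.length).bddAbove
  obtain ⟨s, hs, hsR⟩ := hst R
  refine MonoidHom.exists_surjective_of_ker_le hφ
    (FreeGroup.lift_surjective_iff_closure_range_eq_top.2 hs) ?_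
  rw [← hS]
  refine Subgroup.normalClosure_le_normal fun w hw => ?_
  exact (hsR w (hR ⟨w, hw, rfl⟩)).2 (hS.le (Subgroup.subset_normalClosure hw))

/-- If `G ⊑ H` and `H` is finitely presented, then `G` is a quotient of `H`. -/
theorem quotient_of_preforms_finitely_presented
    (G H : Type*) [Group G] [Group H] (hG : Group.FG G)
    (hH : IsFinitelyPresented H) (hpre : Preforms G H) :
    ∃ f : H →* G, Function.Surjective f :=
  quotient_of_preforms_finitely_presented_general G H hH hpre
end

section
/- Let G and H be finitely generated groups with G ⊑ H, let n : ℕ, and let w be an element of the free group on Fin n such that FreeGroup.lift g w = 1 for every tuple g : Fin n → G. Then FreeGroup.lift h w = 1 for every tuple h : Fin n → H. (In other words, every identity satisfied by G is satisfied by H.) -/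
/-- If `G ⊑ H`, then every identity satisfied by `G` is satisfied by `H`. -/
theorem identity_of_preforms
    (G H : Type*) [Group G] [Group H] (hG : Group.FG G) (hH : Group.FG H)
    (hpre : Preforms G H) (n : ℕ) (w : FreeGroup (Fin n))
    (hw : ∀ g : Fin n → G, FreeGroup.lift g w = 1) :
    ∀ h : Fin n → H, FreeGroup.lift h w = 1 := by
  intro h
  obtain ⟨k, t, ht, hR⟩ := hpre
  -- lift t is surjective
  have hsurj : Function.Surjective (FreeGroup.lift t) := by
    rw [← MonoidHom.range_eq_top, FreeGroup.range_lift_eq_closure, ht]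
  choose v hv using fun i => hsurj (h i)
  set w' : FreeGroup (Fin k) := FreeGroup.lift v w with hw'
  obtain ⟨s, hs, hposs⟩ := hR (FreeGroup.toWord w').length
  have hcompG : FreeGroup.lift s w' = FreeGroup.lift (fun i => FreeGroup.lift s (v i)) w := by
    rw [hw', ← MonoidHom.comp_apply]; congr 1; ext i; simp
  have hcompH : FreeGroup.lift t w' = FreeGroup.lift (fun i => FreeGroup.lift t (v i)) w := by
    rw [hw', ← MonoidHom.comp_apply]; congr 1; ext i; simp
  have hs1 : FreeGroup.lift s w' = 1 := by
    rw [hcompG]; exact hw _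
  have ht1 : FreeGroup.lift t w' = 1 := (hposs w' le_rfl).mp hs1
  rw [hcompH] at ht1
  convert ht1 using 2
  ext i
  simpa using (hv i).symm
end

section
/- Let A, B, G be finitely generated groups with A ⊑ B, and suppose there is a surjective group homomorphism from G onto A. Then there exists a finitely generated group H such that G ⊑ H and there is a surjective group homomorphism from H onto B. -/
/-!
Write `A ⊑ B` via generating tuples `a n` of `A` whose relations agree with those of a fixed
generating tuple `t` of `B` on the ball of radius `n`. Lift each `a n` to `G` and pad it with a
fixed finite generating set of `G`, corrected into `ker π`, to get generating tuples `s n` of `G`.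
Let `H` be the ultralimit of the marked groups `(G, s n)` along a nonprincipal ultrafilter: the
free group modulo the words that are eventually relations. Then `G ⊑ H`, since the ultrafilter
decides each of the finitely many words of bounded length. A relation of `H` is a relation of
infinitely many `(G, s n)`, hence (after deleting the padding letters) of infinitely many
`(A, a n)`, hence of `(B, t)`; so `t` padded by `1` induces a surjection `H → B`.
-/

open Filter

section EventualKer

variable {ι F G : Type*} [Group F] [Group G]

def eventualKer (l : Filter ι) (f : ι → F →* G) : Subgroup F where
  carrier := {w | ∀ᶠ i in l, f i w = 1}
  one_mem' := .of_forall fun i => map_one (f i)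
  mul_mem' hx hy := (hx.and hy).mono fun i h => by rw [map_mul, h.1, h.2, one_mul]
  inv_mem' hx := hx.mono fun i h => by rw [map_inv, h, inv_one]

instance eventualKer_normal (l : Filter ι) (f : ι → F →* G) : (eventualKer l f).Normal where
  conj_mem w hw g := hw.mono fun i h => by simp [h]

end EventualKer

theorem preforms_quotient_eventualKer {ι G : Type*} [Group G] {k : ℕ} (U : Ultrafilter ι)
    {s : ι → Fin k → G} (hs : ∀ i, Subgroup.closure (Set.range (s i)) = ⊤) :
    Preforms G (FreeGroup (Fin k) ⧸ eventualKer U fun i => FreeGroup.lift (s i)) := by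
  set N := eventualKer (U : Filter ι) fun i => FreeGroup.lift (s i)
  have hlift : FreeGroup.lift (QuotientGroup.mk' N ∘ FreeGroup.of) = QuotientGroup.mk' N :=
    FreeGroup.ext_hom _ _ fun i => by simp
  refine ⟨k, QuotientGroup.mk' N ∘ FreeGroup.of, ?_, fun R => ?_⟩
  · rw [← FreeGroup.lift_surjective_iff_closure_range_eq_top, hlift]
    exact QuotientGroup.mk'_surjective N
  have hball : {w : FreeGroup (Fin k) | w.toWord.length ≤ R}.Finite :=
    (List.finite_length_le _ R).preimage FreeGroup.toWord_injective.injOn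
  -- Finitely many words, each of which is eventually a relation or eventually not one.
  have hagree : ∀ᶠ i in U, ∀ w ∈ {w : FreeGroup (Fin k) | w.toWord.length ≤ R},
      (FreeGroup.lift (s i) w = 1 ↔ w ∈ N) := by
    rw [eventually_all_finite hball]
    intro w _
    by_cases hw : w ∈ N
    · exact hw.mono fun i h => iff_of_true h hw
    · exact (Ultrafilter.eventually_not.mpr hw).mono fun i h => iff_of_false h hw
  obtain ⟨i, hi⟩ := hagree.exists
  refine ⟨s i, hs i, fun w hw => ?_⟩
  rw [hlift, QuotientGroup.mk'_apply, QuotientGroup.eq_one_iff]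
  exact hi w hw

theorem lift_eq_one_of_frequently {α A B : Type*} [DecidableEq α] [Group A] [Group B]
    {a : ℕ → α → A} {t : α → B} (hconv : ∀ n (w : FreeGroup α), w.toWord.length ≤ n →
      (FreeGroup.lift (a n) w = 1 ↔ FreeGroup.lift t w = 1))
    {w : FreeGroup α} (hw : ∃ᶠ n in atTop, FreeGroup.lift (a n) w = 1) :
    FreeGroup.lift t w = 1 := by
  obtain ⟨n, hn, hlen⟩ := (hw.and_eventually (eventually_ge_atTop w.toWord.length)).exists
  exact (hconv n w hlen).mp hn

theorem FreeGroup.map_lift {α A B : Type*} [Group A] [Group B] (π : A →* B) (f : α → A)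
    (w : FreeGroup α) : π (FreeGroup.lift f w) = FreeGroup.lift (π ∘ f) w :=
  FreeGroup.lift_unique (π.comp (FreeGroup.lift f)) (by simp)

theorem FreeGroup.lift_append_one {A : Type*} [Group A] {k m : ℕ} (u : Fin k → A)
    (w : FreeGroup (Fin (k + m))) :
    FreeGroup.lift (Fin.append u 1) w =
      FreeGroup.lift u (FreeGroup.lift (Fin.append FreeGroup.of 1) w) := by
  refine (FreeGroup.lift_unique ((FreeGroup.lift u).comp _) fun i => ?_).symm
  refine Fin.addCases (fun i => ?_) (fun j => ?_) i <;> simp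

theorem Fin.range_subset_range_append_left {α : Type*} {k m : ℕ} (u : Fin k → α)
    (v : Fin m → α) : Set.range u ⊆ Set.range (Fin.append u v) := by
  rintro _ ⟨i, rfl⟩
  exact ⟨Fin.castAdd m i, Fin.append_left u v i⟩

theorem exists_generating_lift_append_one {G A : Type*} [Group G] [Group A] (hG : Group.FG G)
    {π : G →* A} (hπ : Function.Surjective π) :
    ∃ m : ℕ, ∀ {k : ℕ} (a : Fin k → A), Subgroup.closure (Set.range a) = ⊤ →
      ∃ s : Fin (k + m) → G, Subgroup.closure (Set.range s) = ⊤ ∧ π ∘ s = Fin.append a 1 := by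
  obtain ⟨S, hS, hSfin⟩ := Group.fg_iff.mp hG
  obtain ⟨m, g, -, rfl⟩ := hSfin.fin_param
  refine ⟨m, fun {k} a ha => ?_⟩
  choose b hb using fun i => hπ (a i)
  have hx : ∀ j, ∃ x ∈ Subgroup.closure (Set.range b), π x = π (g j) := by
    intro j
    have hmap : (Subgroup.closure (Set.range b)).map π = ⊤ := by
      rw [MonoidHom.map_closure, ← Set.range_comp, show π ∘ b = a from funext hb, ha]
    exact Subgroup.mem_map.mp (hmap ▸ Subgroup.mem_top (π (g j)))
  choose x hxb hxg using hx
  -- Correcting each generator `g j` by `x j` moves it into `ker π` without changing what is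
  -- generated.
  set corr : Fin m → G := fun j => (x j)⁻¹ * g j
  refine ⟨Fin.append b corr, ?_, ?_⟩
  · rw [eq_top_iff, ← hS, Subgroup.closure_le]
    rintro _ ⟨j, rfl⟩
    have hxj := Subgroup.closure_mono (Fin.range_subset_range_append_left b corr) (hxb j)
    have hcorr : corr j ∈ Subgroup.closure (Set.range (Fin.append b corr)) :=
      Subgroup.subset_closure ⟨Fin.natAdd k j, Fin.append_right b corr j⟩
    simpa [corr] using mul_mem hxj hcorr
  · funext i
    refine Fin.addCases (fun i => ?_) (fun j => ?_) i <;> simp [corr, hb, hxg]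

theorem eventualKer_le_ker_lift_append_one {A B G : Type*} [Group A] [Group B] [Group G]
    {k m : ℕ} {l : Filter ℕ} [l.NeBot] (hl : l ≤ atTop) {a : ℕ → Fin k → A} {t : Fin k → B}
    (hconv : ∀ n (w : FreeGroup (Fin k)), w.toWord.length ≤ n →
      (FreeGroup.lift (a n) w = 1 ↔ FreeGroup.lift t w = 1))
    (π : G →* A) {s : ℕ → Fin (k + m) → G} (hs : ∀ n, π ∘ s n = Fin.append (a n) 1) :
    eventualKer l (fun n => FreeGroup.lift (s n)) ≤ (FreeGroup.lift (Fin.append t 1)).ker := by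
  intro w hw
  rw [MonoidHom.mem_ker, FreeGroup.lift_append_one]
  refine lift_eq_one_of_frequently hconv ?_
  refine (hw.frequently.filter_mono hl).mono fun n hn => ?_
  rw [← FreeGroup.lift_append_one, ← hs, ← FreeGroup.map_lift, hn, map_one]

theorem exists_preformed_with_quotient_general
    (A B G : Type*) [Group A] [Group B] [Group G]
    (hG : Group.FG G)
    (hAB : Preforms A B) (π : G →* A) (hπ : Function.Surjective π) :
    ∃ (H : Type) (_ : Group H), Group.FG H ∧ Preforms G H ∧
      ∃ ρ : H →* B, Function.Surjective ρ := by
  obtain ⟨k, t, ht, hconv⟩ := hAB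
  choose a ha hconv using hconv
  obtain ⟨m, hlift⟩ := exists_generating_lift_append_one hG hπ
  choose s hs hπs using fun n => hlift (a n) (ha n)
  have hφ : Function.Surjective (FreeGroup.lift (Fin.append t (1 : Fin m → B))) := by
    rw [FreeGroup.lift_surjective_iff_closure_range_eq_top, eq_top_iff, ← ht]
    exact Subgroup.closure_mono (Fin.range_subset_range_append_left t 1)
  exact ⟨_, inferInstance, inferInstance, preforms_quotient_eventualKer _ hs,
    _, QuotientGroup.lift_surjective_of_surjective _ _ hφ
      (eventualKer_le_ker_lift_append_one Nat.hyperfilter_le_atTop hconv π hπs)⟩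

/-- If `A ⊑ B` and `A` is a quotient of `G`, then there exists a group `H` with `G ⊑ H`
such that `B` is a quotient of `H`. -/
theorem exists_preformed_with_quotient
    (A B G : Type*) [Group A] [Group B] [Group G]
    (hA : Group.FG A) (hB : Group.FG B) (hG : Group.FG G)
    (hAB : Preforms A B) (π : G →* A) (hπ : Function.Surjective π) :
    ∃ (H : Type) (_ : Group H), Group.FG H ∧ Preforms G H ∧
      ∃ ρ : H →* B, Function.Surjective ρ :=
  exists_preformed_with_quotient_general A B G hG hAB π hπ
end

section
/- Let W be a set of elements of the free group on ℕ (words in countably many letters, each word involving only finitely many letters), and for a group K define the verbal subgroup W(K) as the subgroup of K generated by all values FreeGroup.lift g w for w ∈ W and g : ℕ → K. Let G and H be finitely generated groups with H finitely presented and G ⊑ H. Then: (1) the verbal subgroups W(G) and W(H) have the same cardinality; (2) if W(G) is finite, then W(G) and W(H) are isomorphic as groups. -/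
/-- The verbal subgroup `W(K)` of `K` associated to a set `W` of words in countably many
letters. -/
def verbalSubgroup (W : Set (FreeGroup ℕ)) (K : Type*) [Group K] : Subgroup K :=
  Subgroup.closure {x : K | ∃ w ∈ W, ∃ g : ℕ → K, FreeGroup.lift g w = x}

universe u v

section Aux

variable {α : Type*} {M : Type*} {N : Type*} [Group M] [Group N]

theorem freeGroup_hom_lift_comp (φ : M →* N) (f : α → M) :
    φ.comp (FreeGroup.lift f) = FreeGroup.lift (φ ∘ f) :=
  FreeGroup.ext_hom _ _ (by simp)

theorem freeGroup_hom_lift_apply (φ : M →* N) (f : α → M) (w : FreeGroup α) :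
    φ (FreeGroup.lift f w) = FreeGroup.lift (φ ∘ f) w :=
  DFunLike.congr_fun (freeGroup_hom_lift_comp φ f) w

theorem verbal_map_eq (W : Set (FreeGroup ℕ)) (φ : M →* N) (hφ : Function.Surjective φ) :
    (verbalSubgroup W M).map φ = verbalSubgroup W N := by
  unfold verbalSubgroup
  rw [MonoidHom.map_closure]
  congr 1
  ext x
  constructor
  · rintro ⟨y, ⟨w, hw, g, rfl⟩, rfl⟩
    exact ⟨w, hw, φ ∘ g, (freeGroup_hom_lift_apply φ g w).symm⟩
  · rintro ⟨w, hw, g, rfl⟩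
    refine ⟨FreeGroup.lift (Function.surjInv hφ ∘ g) w, ⟨w, hw, _, rfl⟩, ?_⟩
    rw [freeGroup_hom_lift_apply]
    have : φ ∘ (Function.surjInv hφ ∘ g) = g := by
      funext i; exact Function.surjInv_eq hφ (g i)
    rw [this]

/-- Tietze-style lemma: if `K` is finitely presented, then the kernel of any surjection from
a finitely generated free group onto `K` is the normal closure of a finite set. -/
theorem ker_lift_eq_normalClosure {K : Type*} [Group K] {k : ℕ}
    (hK : IsFinitelyPresented K) (τ : FreeGroup (Fin k) →* K) (hτ : Function.Surjective τ) :
    ∃ S : Set (FreeGroup (Fin k)), S.Finite ∧ MonoidHom.ker τ = Subgroup.normalClosure S := by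
  classical
  obtain ⟨n, Rel, ⟨e⟩⟩ := hK
  set π : FreeGroup (Fin n) →* K :=
    (e.symm.toMonoidHom).comp (QuotientGroup.mk' _) with hπdef
  have hπ : Function.Surjective π :=
    e.symm.surjective.comp (QuotientGroup.mk'_surjective _)
  have hkerπ : ∀ x, π x = 1 ↔ x ∈ Subgroup.normalClosure (Rel : Set (FreeGroup (Fin n))) := by
    intro x
    rw [hπdef]
    simp only [MonoidHom.comp_apply, MulEquiv.coe_toMonoidHom]
    rw [EmbeddingLike.map_eq_one_iff]
    exact QuotientGroup.eq_one_iff x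
  set α : FreeGroup (Fin n) →* FreeGroup (Fin k) :=
    FreeGroup.lift (fun i => Function.surjInv hτ (π (FreeGroup.of i))) with hαdef
  have hτα : ∀ x, τ (α x) = π x := by
    have : τ.comp α = π := by
      apply FreeGroup.ext_hom
      intro i
      simp only [hαdef, MonoidHom.comp_apply, FreeGroup.lift_apply_of]
      exact Function.surjInv_eq hτ _
    intro x
    exact DFunLike.congr_fun this x
  set β : FreeGroup (Fin k) →* FreeGroup (Fin n) :=
    FreeGroup.lift (fun j => Function.surjInv hπ (τ (FreeGroup.of j))) with hβdef
  have hπβ : ∀ x, π (β x) = τ x := by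
    have : π.comp β = τ := by
      apply FreeGroup.ext_hom
      intro j
      simp only [hβdef, MonoidHom.comp_apply, FreeGroup.lift_apply_of]
      exact Function.surjInv_eq hπ _
    intro x
    exact DFunLike.congr_fun this x
  set S : Set (FreeGroup (Fin k)) :=
    (α '' (Rel : Set (FreeGroup (Fin n)))) ∪
      Set.range (fun j : Fin k => (FreeGroup.of j)⁻¹ * α (β (FreeGroup.of j))) with hSdef
  have hSfin : S.Finite := (Rel.finite_toSet.image _).union (Set.finite_range _)
  refine ⟨S, hSfin, ?_⟩
  have hSker : S ⊆ (MonoidHom.ker τ : Set (FreeGroup (Fin k))) := by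
    rintro x (⟨r, hr, rfl⟩ | ⟨j, rfl⟩)
    · have : π r = 1 := (hkerπ r).mpr (Subgroup.subset_normalClosure hr)
      simpa [MonoidHom.mem_ker, hτα] using this
    · have : τ ((FreeGroup.of j)⁻¹ * α (β (FreeGroup.of j))) = 1 := by
        rw [map_mul, map_inv, hτα, hπβ, inv_mul_cancel]
      simpa [MonoidHom.mem_ker] using this
  have le₁ : Subgroup.normalClosure S ≤ MonoidHom.ker τ :=
    Subgroup.normalClosure_le_normal hSker
  -- the key subgroup
  let Kgp : Subgroup (FreeGroup (Fin k)) :=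
    { carrier := {u | u⁻¹ * α (β u) ∈ Subgroup.normalClosure S}
      one_mem' := by
        show (1:FreeGroup (Fin k))⁻¹ * α (β 1) ∈ Subgroup.normalClosure S
        simpa using (Subgroup.normalClosure S).one_mem
      mul_mem' := by
        intro x y hx hy
        have hid : (x * y)⁻¹ * α (β (x * y)) =
            (y⁻¹ * (x⁻¹ * α (β x)) * y⁻¹⁻¹) * (y⁻¹ * α (β y)) := by
          rw [map_mul, map_mul]
          group
        show (x * y)⁻¹ * α (β (x * y)) ∈ Subgroup.normalClosure S
        rw [hid]
        exact mul_mem (Subgroup.normalClosure_normal.conj_mem _ hx y⁻¹) hy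
      inv_mem' := by
        intro x hx
        have hid : (x⁻¹)⁻¹ * α (β x⁻¹) = x * (x⁻¹ * α (β x))⁻¹ * x⁻¹ := by
          rw [map_inv, map_inv]
          group
        show (x⁻¹)⁻¹ * α (β x⁻¹) ∈ Subgroup.normalClosure S
        rw [hid]
        exact Subgroup.normalClosure_normal.conj_mem _ (inv_mem hx) x }
  have key : ∀ u : FreeGroup (Fin k), u⁻¹ * α (β u) ∈ Subgroup.normalClosure S := by
    have hle : Subgroup.closure (Set.range (FreeGroup.of : Fin k → FreeGroup (Fin k))) ≤ Kgp := by
      rw [Subgroup.closure_le]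
      rintro _ ⟨j, rfl⟩
      exact Subgroup.subset_normalClosure (Or.inr ⟨j, rfl⟩)
    intro u
    have : u ∈ Kgp := by
      apply hle
      rw [FreeGroup.closure_range_of]
      trivial
    exact this
  have le₂ : MonoidHom.ker τ ≤ Subgroup.normalClosure S := by
    intro u hu
    have hβu : β u ∈ Subgroup.normalClosure (Rel : Set (FreeGroup (Fin n))) := by
      rw [← hkerπ, hπβ]
      exact hu
    have hαβu : α (β u) ∈ Subgroup.normalClosure S := by
      have hcomap : Subgroup.normalClosure (Rel : Set (FreeGroup (Fin n))) ≤
          (Subgroup.normalClosure S).comap α :=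
        Subgroup.normalClosure_le_normal
          (fun r hr => Subgroup.subset_normalClosure (Or.inl ⟨r, hr, rfl⟩))
      exact hcomap hβu
    have hid : u = α (β u) * (u⁻¹ * α (β u))⁻¹ := by group
    rw [hid]
    exact mul_mem hαβu (inv_mem (key u))
  exact le_antisymm le₂ le₁

end Aux

/-- If `G ⊑ H` with `H` finitely presented, then for every set `W` of words the verbal
subgroups `W(G)` and `W(H)` have the same cardinality; and if `W(G)` is finite then
`W(G)` and `W(H)` are isomorphic. -/
theorem verbal_subgroup_of_preforms
    (W : Set (FreeGroup ℕ)) (G : Type u) (H : Type v) [Group G] [Group H]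
    (hG : Group.FG G) (hH : IsFinitelyPresented H) (hpre : Preforms G H) :
    Cardinal.lift.{v} (Cardinal.mk (verbalSubgroup W G)) =
        Cardinal.lift.{u} (Cardinal.mk (verbalSubgroup W H)) ∧
      (Finite (verbalSubgroup W G) →
        Nonempty ((verbalSubgroup W G) ≃* (verbalSubgroup W H))) := by
  classical
  obtain ⟨k, t, ht, hs⟩ := hpre
  set τ : FreeGroup (Fin k) →* H := FreeGroup.lift t with hτdef
  have hτ : Function.Surjective τ := by
    rw [← MonoidHom.range_eq_top, hτdef, FreeGroup.range_lift_eq_closure, ht]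
  obtain ⟨S, hSfin, hker⟩ := ker_lift_eq_normalClosure hH τ hτ
  obtain ⟨R0, hlen⟩ : ∃ R0 : ℕ, ∀ x ∈ S, (FreeGroup.toWord x).length ≤ R0 :=
    ⟨hSfin.toFinset.sup (fun x => (FreeGroup.toWord x).length), fun x hx =>
      Finset.le_sup (f := fun x => (FreeGroup.toWord x).length) (hSfin.mem_toFinset.mpr hx)⟩
  obtain ⟨s₀, hs₀gen, hs₀⟩ := hs R0
  have hlifts₀ : Function.Surjective (FreeGroup.lift s₀) := by
    rw [← MonoidHom.range_eq_top, FreeGroup.range_lift_eq_closure, hs₀gen]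
  have hkill : MonoidHom.ker τ ≤ MonoidHom.ker (FreeGroup.lift s₀) := by
    rw [hker]
    refine Subgroup.normalClosure_le_normal ?_
    intro x hx
    have hx1 : τ x = 1 := by
      have : x ∈ MonoidHom.ker τ := by
        rw [hker]; exact Subgroup.subset_normalClosure hx
      exact this
    exact MonoidHom.mem_ker.mpr ((hs₀ x (hlen x hx)).mpr hx1)
  set q := QuotientGroup.quotientKerEquivOfSurjective τ hτ with hq
  set φ : H →* G :=
    (QuotientGroup.lift (MonoidHom.ker τ) (FreeGroup.lift s₀) hkill).comp q.symm.toMonoidHom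
    with hφdef
  have hφτ : ∀ u, φ (τ u) = FreeGroup.lift s₀ u := by
    intro u
    have h1 : q (QuotientGroup.mk u) = τ u := rfl
    have h2 : q.symm (τ u) = QuotientGroup.mk u := by
      rw [← h1, MulEquiv.symm_apply_apply]
    rw [hφdef]
    simp only [MonoidHom.comp_apply, MulEquiv.coe_toMonoidHom]
    rw [h2]
    rfl
  have hφ : Function.Surjective φ := by
    intro g
    obtain ⟨u, hu⟩ := hlifts₀ g
    exact ⟨τ u, by rw [hφτ, hu]⟩
  have hmap : (verbalSubgroup W H).map φ = verbalSubgroup W G := verbal_map_eq W φ hφ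
  -- countability
  have hcF : Countable (FreeGroup (Fin k)) := FreeGroup.toWord_injective.countable
  have hcH : Countable H := hτ.countable
  have hcG : Countable G := hlifts₀.countable
  -- approximation property
  have hP : ∀ h : H, h ∈ verbalSubgroup W H → ∃ u : FreeGroup (Fin k), τ u = h ∧
      ∀ s : Fin k → G, FreeGroup.lift s u ∈ verbalSubgroup W G := by
    intro h hh
    refine Subgroup.closure_induction ?_ ?_ ?_ ?_ hh
    · rintro x ⟨w, hw, g, rfl⟩
      refine ⟨FreeGroup.lift (Function.surjInv hτ ∘ g) w, ?_, ?_⟩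
      · rw [freeGroup_hom_lift_apply]
        have : (τ : FreeGroup (Fin k) →* H) ∘ (Function.surjInv hτ ∘ g) = g := by
          funext i; exact Function.surjInv_eq hτ (g i)
        rw [this]
      · intro s
        refine Subgroup.subset_closure ⟨w, hw, (FreeGroup.lift s) ∘ (Function.surjInv hτ ∘ g),
          (freeGroup_hom_lift_apply _ _ _).symm⟩
    · exact ⟨1, map_one τ, fun s => by rw [map_one]; exact one_mem _⟩
    · rintro x y hx hy ⟨ux, hux, hux'⟩ ⟨uy, huy, huy'⟩
      exact ⟨ux * uy, by rw [map_mul, hux, huy],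
        fun s => by rw [map_mul]; exact mul_mem (hux' s) (huy' s)⟩
    · rintro x hx ⟨ux, hux, hux'⟩
      exact ⟨ux⁻¹, by rw [map_inv, hux], fun s => by rw [map_inv]; exact inv_mem (hux' s)⟩
  have hC : ∀ (m : ℕ) (f : Fin m → verbalSubgroup W H), Function.Injective f →
      ∃ f' : Fin m → verbalSubgroup W G, Function.Injective f' := by
    intro m f hf
    choose u hu hu' using fun i => hP (f i) (f i).2
    set R : ℕ := Finset.univ.sup
      (fun p : Fin m × Fin m => (FreeGroup.toWord ((u p.1) * (u p.2)⁻¹)).length) with hR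
    obtain ⟨s, hsg, hsp⟩ := hs R
    refine ⟨fun i => ⟨FreeGroup.lift s (u i), hu' i s⟩, ?_⟩
    intro i j hij
    have hij' : FreeGroup.lift s (u i) = FreeGroup.lift s (u j) :=
      congrArg Subtype.val hij
    have h1 : FreeGroup.lift s ((u i) * (u j)⁻¹) = 1 := by
      rw [map_mul, map_inv, hij', mul_inv_cancel]
    have hle : (FreeGroup.toWord ((u i) * (u j)⁻¹)).length ≤ R := by
      rw [hR]
      exact Finset.le_sup (f := fun p : Fin m × Fin m =>
        (FreeGroup.toWord ((u p.1) * (u p.2)⁻¹)).length) (Finset.mem_univ (i, j))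
    have h2 : τ ((u i) * (u j)⁻¹) = 1 := (hsp _ hle).mp h1
    have h3 : τ (u i) = τ (u j) := by
      rw [map_mul, map_inv] at h2
      exact mul_inv_eq_one.mp h2
    apply hf
    apply Subtype.ext
    rw [← hu i, ← hu j, h3]
  -- the homomorphism between the verbal subgroups
  set ψ : verbalSubgroup W H →* verbalSubgroup W G :=
    (MulEquiv.subgroupCongr hmap).toMonoidHom.comp (φ.subgroupMap (verbalSubgroup W H))
    with hψdef
  have hψsurj : Function.Surjective ψ := by
    have h1 := φ.subgroupMap_surjective (verbalSubgroup W H)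
    exact (MulEquiv.subgroupCongr hmap).surjective.comp h1
  by_cases hfin : Finite (verbalSubgroup W G)
  · -- finite case
    have hWHfin : Finite (verbalSubgroup W H) := by
      by_contra hinf
      rw [not_finite_iff_infinite] at hinf
      have emb := Infinite.natEmbedding (verbalSubgroup W H)
      set m := Nat.card (verbalSubgroup W G) + 1 with hm
      obtain ⟨f', hf'⟩ := hC m (fun i : Fin m => emb i)
        (emb.injective.comp Fin.val_injective)
      have hle := Nat.card_le_card_of_injective f' hf'
      simp only [Nat.card_eq_fintype_card, Fintype.card_fin] at hle
      omega
    have h1 : Nat.card (verbalSubgroup W H) ≤ Nat.card (verbalSubgroup W G) := by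
      obtain ⟨f', hf'⟩ := hC (Nat.card (verbalSubgroup W H))
        (fun i => (Finite.equivFin (verbalSubgroup W H)).symm i)
        ((Finite.equivFin (verbalSubgroup W H)).symm.injective)
      have hle := Nat.card_le_card_of_injective f' hf'
      simpa using hle
    have h2 := Nat.card_le_card_of_surjective ψ hψsurj
    have hcard : Nat.card (verbalSubgroup W H) = Nat.card (verbalSubgroup W G) :=
      le_antisymm h1 h2
    have hbij : Function.Bijective ψ :=
      (Nat.bijective_iff_surjective_and_card ψ).mpr ⟨hψsurj, hcard⟩
    refine ⟨?_, fun _ => ⟨(MulEquiv.ofBijective ψ hbij).symm⟩⟩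
    exact Cardinal.lift_mk_eq'.mpr ⟨(MulEquiv.ofBijective ψ hbij).symm.toEquiv⟩
  · -- infinite case
    rw [not_finite_iff_infinite] at hfin
    have hWHinf : Infinite (verbalSubgroup W H) := by
      by_contra hfinH
      rw [not_infinite_iff_finite] at hfinH
      have : Finite (verbalSubgroup W G) := Finite.of_surjective ψ hψsurj
      exact (not_finite_iff_infinite.mpr hfin) this
    refine ⟨?_, fun hf => absurd hf (not_finite_iff_infinite.mpr hfin)⟩
    rw [Cardinal.mk_eq_aleph0 (verbalSubgroup W G), Cardinal.mk_eq_aleph0 (verbalSubgroup W H)]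
    simp
end

section
/- Let G₁, G₂, H₁, H₂ be finitely generated groups with G₁ ⊑ H₁ and G₂ ⊑ H₂. Then: (1) G₁ × G₂ ⊑ H₁ × H₂ (direct products); and (2) G₁ ∗ G₂ ⊑ H₁ ∗ H₂ (free products, i.e., coproducts of groups). -/
/-!
Both `G₁ × G₂` and `G₁ ∗ G₂` are generated by the images of the factors, so concatenating
generating tuples of the factors gives generating tuples, and it remains to compare the kernels of
the combined evaluation maps on the ball of radius `R`.

For direct products, a word evaluates to `1` iff its two projections (delete the letters of the
other block) do, and projecting does not increase length.

For free products, read a word of length `≤ R` as a product of syllables, each a word in one block,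
of total length `≤ R`. A syllable that evaluates to `1` in `G₁ ∗ G₂` is short, hence also evaluates
to `1` in `H₁ ∗ H₂`, and may be deleted; adjacent syllables from the same block may be merged.
Neither step changes the two values nor increases the total length, and when neither applies the
syllables alternate and evaluate to nontrivial elements, so by the normal form theorem for free
products their product is `1` only if there are no syllables at all.
-/

open Monoid FreeGroup Subgroup

universe u v

section

variable {α β G H G₁ G₂ H₁ H₂ P Q : Type*} [Group G] [Group H] [Group G₁] [Group G₂]
  [Group H₁] [Group H₂] [Group P] [Group Q]

namespace FreeGroup

theorem lift_comp_map (u : β → G) (f : α → β) : (lift u).comp (map f) = lift (u ∘ f) := by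
  ext; simp

theorem lift_sumElim_inl_inr (s₁ : α → G₁) (s₂ : β → G₂) :
    lift (Sum.elim (MonoidHom.inl G₁ G₂ ∘ s₁) (MonoidHom.inr G₁ G₂ ∘ s₂)) =
      ((lift s₁).comp (lift (Sum.elim of 1))).prod ((lift s₂).comp (lift (Sum.elim 1 of))) := by
  ext (a | b) <;> simp

theorem lift_sumElim_coprod_inl_inr (s₁ : α → G₁) (s₂ : β → G₂) :
    lift (Sum.elim (Coprod.inl ∘ s₁) (Coprod.inr ∘ s₂)) =
      (Coprod.map (lift s₁) (lift s₂)).comp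
        (lift (Sum.elim (Coprod.inl ∘ of) (Coprod.inr ∘ of))) := by
  ext (a | b) <;> simp

variable [DecidableEq α] [DecidableEq β]

theorem norm_lift_le {g : α → FreeGroup β} (hg : ∀ a, (g a).norm ≤ 1) (w : FreeGroup α) :
    (lift g w).norm ≤ w.norm := by
  suffices ∀ l : List (α × Bool), (lift g (mk l)).norm ≤ l.length by
    have := this w.toWord
    rwa [mk_toWord] at this
  intro l
  induction l with
  | nil => simp [← one_eq_mk]
  | cons p l ih =>
    have hp : (lift g (mk [p])).norm ≤ 1 := by
      rcases p with ⟨a, _ | _⟩ <;> simpa [lift_mk, norm_inv_eq] using hg a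
    calc (lift g (mk (p :: l))).norm
        ≤ (lift g (mk [p])).norm + (lift g (mk l)).norm := by
          rw [← List.singleton_append, ← mul_mk, _root_.map_mul]
          exact norm_mul_le _ _
      _ ≤ (p :: l).length := by simp only [List.length_cons]; omega

theorem norm_map_le (f : α → β) (w : FreeGroup α) : (map f w).norm ≤ w.norm := by
  rw [map_eq_lift]
  exact norm_lift_le (fun a => (norm_of _).le) w

def KerAgreeOnBall (f : FreeGroup α →* G) (g : FreeGroup α →* H) (R : ℕ) : Prop :=
  ∀ w : FreeGroup α, w.norm ≤ R → (f w = 1 ↔ g w = 1)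

theorem KerAgreeOnBall.comp {f : FreeGroup α →* G} {g : FreeGroup α →* H} {R : ℕ}
    (h : KerAgreeOnBall f g R) {φ : FreeGroup β →* FreeGroup α}
    (hφ : ∀ w, (φ w).norm ≤ w.norm) : KerAgreeOnBall (f.comp φ) (g.comp φ) R :=
  fun w hw => h (φ w) ((hφ w).trans hw)

end FreeGroup

theorem Subgroup.closure_range_sumElim (φ₁ : G₁ →* P) (φ₂ : G₂ →* P)
    (hφ : φ₁.range ⊔ φ₂.range = ⊤) {s₁ : α → G₁} {s₂ : β → G₂}
    (h₁ : closure (Set.range s₁) = ⊤) (h₂ : closure (Set.range s₂) = ⊤) :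
    closure (Set.range (Sum.elim (φ₁ ∘ s₁) (φ₂ ∘ s₂))) = ⊤ := by
  rw [Set.Sum.elim_range, closure_union, Set.range_comp, Set.range_comp,
    ← MonoidHom.map_closure, ← MonoidHom.map_closure, h₁, h₂, ← MonoidHom.range_eq_map,
    ← MonoidHom.range_eq_map, hφ]

theorem Preforms.of_finite [Finite α] [DecidableEq α] (t : α → H)
    (ht : closure (Set.range t) = ⊤)
    (hs : ∀ R, ∃ s : α → G, closure (Set.range s) = ⊤ ∧ KerAgreeOnBall (lift s) (lift t) R) :
    Preforms G H := by
  obtain ⟨k, ⟨e⟩⟩ := Finite.exists_equiv_fin α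
  refine ⟨k, t ∘ e.symm, by rwa [e.symm.surjective.range_comp], fun R => ?_⟩
  obtain ⟨s, hs, hst⟩ := hs R
  refine ⟨s ∘ e.symm, by rwa [e.symm.surjective.range_comp], ?_⟩
  have := hst.comp (norm_map_le e.symm)
  rwa [lift_comp_map, lift_comp_map] at this

theorem Preforms.sumElim (φ₁ : G₁ →* P) (φ₂ : G₂ →* P) (ψ₁ : H₁ →* Q) (ψ₂ : H₂ →* Q)
    (hφ : φ₁.range ⊔ φ₂.range = ⊤) (hψ : ψ₁.range ⊔ ψ₂.range = ⊤)
    (hagree : ∀ {k₁ k₂ R : ℕ} {s₁ : Fin k₁ → G₁} {s₂ : Fin k₂ → G₂} {t₁ : Fin k₁ → H₁}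
      {t₂ : Fin k₂ → H₂}, KerAgreeOnBall (lift s₁) (lift t₁) R →
      KerAgreeOnBall (lift s₂) (lift t₂) R →
      KerAgreeOnBall (lift (Sum.elim (φ₁ ∘ s₁) (φ₂ ∘ s₂)))
        (lift (Sum.elim (ψ₁ ∘ t₁) (ψ₂ ∘ t₂))) R)
    (h₁ : Preforms G₁ H₁) (h₂ : Preforms G₂ H₂) : Preforms P Q := by
  obtain ⟨k₁, t₁, ht₁, hs₁⟩ := h₁
  obtain ⟨k₂, t₂, ht₂, hs₂⟩ := h₂
  refine .of_finite _ (closure_range_sumElim ψ₁ ψ₂ hψ ht₁ ht₂) fun R => ?_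
  obtain ⟨s₁, hs₁, h₁⟩ := hs₁ R
  obtain ⟨s₂, hs₂, h₂⟩ := hs₂ R
  exact ⟨_, closure_range_sumElim φ₁ φ₂ hφ hs₁ hs₂, hagree h₁ h₂⟩

theorem MonoidHom.range_inl_sup_range_inr :
    (MonoidHom.inl G H).range ⊔ (MonoidHom.inr G H).range = ⊤ := by
  refine eq_top_iff.2 fun x _ => ?_
  rw [← Prod.fst_mul_snd x]
  exact mul_mem (mem_sup_left ⟨x.1, rfl⟩) (mem_sup_right ⟨x.2, rfl⟩)

theorem FreeGroup.KerAgreeOnBall.prod [DecidableEq α] [DecidableEq β] {s₁ : α → G₁}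
    {t₁ : α → H₁} {s₂ : β → G₂} {t₂ : β → H₂} {R : ℕ}
    (h₁ : KerAgreeOnBall (lift s₁) (lift t₁) R) (h₂ : KerAgreeOnBall (lift s₂) (lift t₂) R) :
    KerAgreeOnBall (lift (Sum.elim (MonoidHom.inl G₁ G₂ ∘ s₁) (MonoidHom.inr G₁ G₂ ∘ s₂)))
      (lift (Sum.elim (MonoidHom.inl H₁ H₂ ∘ t₁) (MonoidHom.inr H₁ H₂ ∘ t₂))) R := by
  have h₁' := h₁.comp (norm_lift_le (g := (Sum.elim of 1 : α ⊕ β → FreeGroup α))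
    (by rintro (a | b) <;> simp))
  have h₂' := h₂.comp (norm_lift_le (g := (Sum.elim 1 of : α ⊕ β → FreeGroup β))
    (by rintro (a | b) <;> simp))
  intro w hw
  simp only [lift_sumElim_inl_inr, MonoidHom.prod_apply, Prod.mk_eq_one]
  exact and_congr (h₁' w hw) (h₂' w hw)

theorem Preforms.prod (h₁ : Preforms G₁ H₁) (h₂ : Preforms G₂ H₂) :
    Preforms (G₁ × G₂) (H₁ × H₂) :=
  .sumElim _ _ _ _ MonoidHom.range_inl_sup_range_inr MonoidHom.range_inl_sup_range_inr
    KerAgreeOnBall.prod h₁ h₂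

theorem Monoid.Coprod.list_prod_ne_one_of_isChain {G : Type u} {H : Type v} [Group G]
    [Group H] {S : List (G ⊕ H)} (hS : S ≠ [])
    (h1 : ∀ x ∈ S, Sum.elim Coprod.inl Coprod.inr x ≠ (1 : Coprod G H))
    (halt : S.IsChain fun x y => x.isLeft ≠ y.isLeft) :
    (S.map (Sum.elim Coprod.inl Coprod.inr)).prod ≠ 1 := by
  -- The normal form theorem is available for `CoprodI`, whose factors share one universe.
  let M : Bool → Type (max u v) := fun b => cond b (ULift.{v} G) (ULift.{u} H)
  let _ : ∀ b, Group (M b) := fun b =>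
    Bool.rec (inferInstance : Group (ULift H)) (inferInstance : Group (ULift G)) b
  let toM : G ⊕ H → Σ b, M b :=
    Sum.elim (fun g => ⟨true, ULift.up g⟩) (fun h => ⟨false, ULift.up h⟩)
  let e : Coprod G H →* CoprodI M := Coprod.lift
    ((CoprodI.of (i := true)).comp (MulEquiv.ulift.symm : G ≃* ULift G).toMonoidHom)
    ((CoprodI.of (i := false)).comp (MulEquiv.ulift.symm : H ≃* ULift H).toMonoidHom)
  let W : CoprodI.Word M :=
    { toList := S.map toM
      ne_one := by
        simp only [List.mem_map]
        rintro _ ⟨a | b, hx, rfl⟩ h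
        · exact h1 _ hx (by simp [show a = 1 from congrArg ULift.down h])
        · exact h1 _ hx (by simp [show b = 1 from congrArg ULift.down h])
      chain_ne :=
        List.isChain_map_of_isChain toM (by rintro (a | a) (b | b) <;> simp [toM]) halt }
  intro hone
  have hW : W.prod = CoprodI.Word.empty.prod := by
    rw [CoprodI.Word.prod_empty, ← _root_.map_one e, ← hone]
    simp only [CoprodI.Word.prod, W, map_list_prod, List.map_map]
    congr 1
    refine List.map_congr_left fun x _ => ?_
    rcases x with a | b <;> rfl
  let _ : ∀ b, DecidableEq (M b) := fun _ => Classical.decEq _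
  have hWempty : W = CoprodI.Word.empty := (CoprodI.Word.equiv (M := M)).symm.injective hW
  exact hS (List.map_eq_nil_iff.mp (congrArg CoprodI.Word.toList hWempty))

theorem Monoid.Coprod.map_comp_sumElim_inl_inr (f : G₁ →* H₁) (g : G₂ →* H₂) :
    Coprod.map f g ∘ Sum.elim Coprod.inl Coprod.inr =
      Sum.elim Coprod.inl Coprod.inr ∘ Sum.map f g := by
  ext (a | b) <;> simp

namespace FreeGroup

variable [DecidableEq α] [DecidableEq β]

theorem exists_syllables (w : FreeGroup (α ⊕ β)) :
    ∃ L : List (FreeGroup α ⊕ FreeGroup β),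
      (L.map (Sum.elim Coprod.inl Coprod.inr)).prod =
        lift (Sum.elim (Coprod.inl ∘ of) (Coprod.inr ∘ of)) w ∧
      (L.map (Sum.elim norm norm)).sum ≤ w.norm := by
  suffices ∀ l : List ((α ⊕ β) × Bool), ∃ L : List (FreeGroup α ⊕ FreeGroup β),
      (L.map (Sum.elim Coprod.inl Coprod.inr)).prod =
        lift (Sum.elim (Coprod.inl ∘ of) (Coprod.inr ∘ of)) (mk l) ∧
      (L.map (Sum.elim norm norm)).sum ≤ l.length by
    have := this w.toWord
    rwa [mk_toWord] at this
  intro l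
  induction l with
  | nil => exact ⟨[], by simp [← one_eq_mk], by simp⟩
  | cons p l ih =>
    obtain ⟨L, hprod, hlen⟩ := ih
    let x : FreeGroup α ⊕ FreeGroup β :=
      Sum.map (fun a => cond p.2 (of a) (of a)⁻¹) (fun b => cond p.2 (of b) (of b)⁻¹) p.1
    have hx : Sum.elim Coprod.inl Coprod.inr x =
        lift (Sum.elim (Coprod.inl ∘ of) (Coprod.inr ∘ of)) (mk [p]) := by
      rcases p with ⟨a | b, _ | _⟩ <;> simp [x, lift_mk]
    have hxn : Sum.elim norm norm x ≤ 1 := by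
      rcases p with ⟨a | b, _ | _⟩ <;> simp [x, norm_inv_eq, norm_of]
    refine ⟨x :: L, ?_, ?_⟩
    · rw [List.map_cons, List.prod_cons, hx, hprod, ← _root_.map_mul, mul_mk,
        List.singleton_append]
    · simp only [List.map_cons, List.sum_cons, List.length_cons]
      omega

theorem exists_merge_of_isLeft_eq {x y : FreeGroup α ⊕ FreeGroup β} (h : x.isLeft = y.isLeft) :
    ∃ z, Sum.elim Coprod.inl Coprod.inr z =
        Sum.elim Coprod.inl Coprod.inr x * (Sum.elim Coprod.inl Coprod.inr y : Coprod _ _) ∧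
      Sum.elim norm norm z ≤ Sum.elim norm norm x + Sum.elim norm norm y := by
  rcases x with u | u <;> rcases y with v | v <;> cases h
  · exact ⟨.inl (u * v), by simp, norm_mul_le u v⟩
  · exact ⟨.inr (u * v), by simp, norm_mul_le u v⟩

theorem coprodMap_syllable_eq_one {f₁ : FreeGroup α →* G₁} {f₂ : FreeGroup β →* G₂}
    {g₁ : FreeGroup α →* H₁} {g₂ : FreeGroup β →* H₂} {R : ℕ}
    (h₁ : ∀ u, u.norm ≤ R → f₁ u = 1 → g₁ u = 1) (h₂ : ∀ v, v.norm ≤ R → f₂ v = 1 → g₂ v = 1)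
    {x : FreeGroup α ⊕ FreeGroup β} (hx : Sum.elim norm norm x ≤ R)
    (hf : Coprod.map f₁ f₂ (Sum.elim Coprod.inl Coprod.inr x) = 1) :
    Coprod.map g₁ g₂ (Sum.elim Coprod.inl Coprod.inr x) = 1 := by
  rcases x with u | v
  · simp [h₁ u hx ((map_eq_one_iff _ Coprod.inl_injective).1 hf)]
  · simp [h₂ v hx ((map_eq_one_iff _ Coprod.inr_injective).1 hf)]

theorem coprodMap_list_prod_eq_one {f₁ : FreeGroup α →* G₁} {f₂ : FreeGroup β →* G₂}
    {g₁ : FreeGroup α →* H₁} {g₂ : FreeGroup β →* H₂} {R : ℕ}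
    (h₁ : ∀ u, u.norm ≤ R → f₁ u = 1 → g₁ u = 1) (h₂ : ∀ v, v.norm ≤ R → f₂ v = 1 → g₂ v = 1)
    (L : List (FreeGroup α ⊕ FreeGroup β)) (hL : (L.map (Sum.elim norm norm)).sum ≤ R)
    (hf : Coprod.map f₁ f₂ (L.map (Sum.elim Coprod.inl Coprod.inr)).prod = 1) :
    Coprod.map g₁ g₂ (L.map (Sum.elim Coprod.inl Coprod.inr)).prod = 1 := by
  induction hn : L.length using Nat.strong_induction_on generalizing L with
  | _ n ih =>
  subst hn
  by_cases htriv : ∃ x ∈ L, Coprod.map f₁ f₂ (Sum.elim Coprod.inl Coprod.inr x) = 1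
  · obtain ⟨x, hx, hfx⟩ := htriv
    obtain ⟨L₁, L₂, rfl⟩ := List.append_of_mem hx
    simp only [List.map_append, List.map_cons, List.sum_append, List.sum_cons] at hL
    have hxR : Sum.elim norm norm x ≤ R := by omega
    have hgx := coprodMap_syllable_eq_one h₁ h₂ hxR hfx
    have hL' : ((L₁ ++ L₂).map (Sum.elim norm norm)).sum ≤ R := by
      rw [List.map_append, List.sum_append]; omega
    have := ih _ (by simp) (L₁ ++ L₂) hL' (by simpa [hfx] using hf) rfl
    simpa [hgx] using this
  by_cases halt : L.IsChain fun x y => x.isLeft ≠ y.isLeft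
  · obtain rfl | hne := eq_or_ne L []
    · simp
    refine absurd hf ?_
    rw [map_list_prod, List.map_map, Coprod.map_comp_sumElim_inl_inr, ← List.map_map]
    refine Coprod.list_prod_ne_one_of_isChain (by simpa using hne) ?_ ?_
    · simp only [List.mem_map]
      rintro _ ⟨x, hx, rfl⟩ h
      exact htriv ⟨x, hx, (congrFun (Coprod.map_comp_sumElim_inl_inr f₁ f₂) x).trans h⟩
    · exact List.isChain_map_of_isChain _ (by rintro (a | a) (b | b) <;> simp) halt
  · rw [List.isChain_iff_forall_rel_of_append_cons_cons] at halt
    push Not at halt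
    obtain ⟨x, y, L₁, L₂, rfl, hxy⟩ := halt
    obtain ⟨z, hz, hzn⟩ := exists_merge_of_isLeft_eq hxy
    have hprod : ((L₁ ++ z :: L₂).map (Sum.elim Coprod.inl Coprod.inr)).prod =
        ((L₁ ++ x :: y :: L₂).map (Sum.elim Coprod.inl Coprod.inr)).prod := by
      simp [hz, mul_assoc]
    rw [← hprod] at hf ⊢
    have hL' : ((L₁ ++ z :: L₂).map (Sum.elim norm norm)).sum ≤ R := by
      simp only [List.map_append, List.map_cons, List.sum_append, List.sum_cons] at hL ⊢
      omega
    exact ih _ (by simp) _ hL' hf rfl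

theorem KerAgreeOnBall.coprod {s₁ : α → G₁} {t₁ : α → H₁} {s₂ : β → G₂} {t₂ : β → H₂}
    {R : ℕ} (h₁ : KerAgreeOnBall (lift s₁) (lift t₁) R)
    (h₂ : KerAgreeOnBall (lift s₂) (lift t₂) R) :
    KerAgreeOnBall (lift (Sum.elim (Coprod.inl ∘ s₁) (Coprod.inr ∘ s₂)))
      (lift (Sum.elim (Coprod.inl ∘ t₁) (Coprod.inr ∘ t₂))) R := by
  intro w hw
  obtain ⟨L, hLw, hLn⟩ := exists_syllables w
  rw [lift_sumElim_coprod_inl_inr s₁ s₂, lift_sumElim_coprod_inl_inr t₁ t₂,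
    MonoidHom.comp_apply, MonoidHom.comp_apply, ← hLw]
  exact ⟨coprodMap_list_prod_eq_one (fun u hu => (h₁ u hu).1) (fun v hv => (h₂ v hv).1) L
      (hLn.trans hw),
    coprodMap_list_prod_eq_one (fun u hu => (h₁ u hu).2) (fun v hv => (h₂ v hv).2) L
      (hLn.trans hw)⟩

end FreeGroup

theorem Preforms.coprod (h₁ : Preforms G₁ H₁) (h₂ : Preforms G₂ H₂) :
    Preforms (Coprod G₁ G₂) (Coprod H₁ H₂) :=
  .sumElim _ _ _ _ Coprod.range_inl_sup_range_inr Coprod.range_inl_sup_range_inr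
    KerAgreeOnBall.coprod h₁ h₂

end

theorem preforms_prod_and_coprod_general
    (G₁ G₂ H₁ H₂ : Type*) [Group G₁] [Group G₂] [Group H₁] [Group H₂]
    (h₁ : Preforms G₁ H₁) (h₂ : Preforms G₂ H₂) :
    Preforms (G₁ × G₂) (H₁ × H₂) ∧
      Preforms (Monoid.Coprod G₁ G₂) (Monoid.Coprod H₁ H₂) :=
  ⟨h₁.prod h₂, h₁.coprod h₂⟩

/-- Preforming is compatible with direct products and free products. -/
theorem preforms_prod_and_coprod
    (G₁ G₂ H₁ H₂ : Type*) [Group G₁] [Group G₂] [Group H₁] [Group H₂]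
    (hG₁ : Group.FG G₁) (hG₂ : Group.FG G₂) (hH₁ : Group.FG H₁) (hH₂ : Group.FG H₂)
    (h₁ : Preforms G₁ H₁) (h₂ : Preforms G₂ H₂) :
    Preforms (G₁ × G₂) (H₁ × H₂) ∧
      Preforms (Monoid.Coprod G₁ G₂) (Monoid.Coprod H₁ H₂) :=
  preforms_prod_and_coprod_general G₁ G₂ H₁ H₂ h₁ h₂
end

section
/- Let (ℤ²)₊ = {(m, n) : ℤ × ℤ | m > 0 ∨ (m = 0 ∧ n > 0)}. Given a set I of prime numbers, an I-colouring is a function φ : (ℤ²)₊ → ℕ whose values lie in I ∪ {1}; its extension φ̂ : ℤ × ℤ → ℤ is defined by φ̂(0,0) = 0, φ̂(z) = φ(z) for z ∈ (ℤ²)₊, and φ̂(-z) = -φ(z) for z ∈ (ℤ²)₊. An I-colouring φ is I-universal if for every R : ℕ and every function θ from {-R,…,R}² ∩ (ℤ²)₊ to I ∪ {1}, there exists a matrix M in SL₂(ℤ) such that θ(z) = φ̂(M·z) for all z ∈ {-R,…,R}² ∩ (ℤ²)₊ (where M·z denotes matrix–vector multiplication). Then: for every set I of primes with at least two elements, there exists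 an injective map from the powerset of ℕ into the set of I-universal colourings; in particular there exist continuum-many distinct I-universal colourings. -/
/-- The "positive" half of `ℤ²`: pairs `(m, n)` with `m > 0`, or `m = 0` and `n > 0`. -/
def Zplus : Set (ℤ × ℤ) := {p | 0 < p.1 ∨ (p.1 = 0 ∧ 0 < p.2)}

/-- The extension `φ̂ : ℤ × ℤ → ℤ` of a colouring `φ : (ℤ²)₊ → ℕ`, with
`φ̂(0,0) = 0`, `φ̂(z) = φ(z)` on `(ℤ²)₊` and `φ̂(-z) = -φ(z)` for `z ∈ (ℤ²)₊`. -/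
noncomputable def extColouring (φ : Zplus → ℕ) : ℤ × ℤ → ℤ := fun p => by
  classical exact
    if h : p ∈ Zplus then (φ ⟨p, h⟩ : ℤ)
    else if h' : -p ∈ Zplus then -(φ ⟨-p, h'⟩ : ℤ)
    else 0

/-- A prime colouring with values in `I ∪ {1}`. -/
def IsIColouring (I : Set ℕ) (φ : Zplus → ℕ) : Prop :=
  ∀ z, φ z ∈ I ∨ φ z = 1

/-- The box `{-R, …, R}²` in `ℤ × ℤ`. -/
def box (R : ℕ) : Set (ℤ × ℤ) := {p | |p.1| ≤ (R : ℤ) ∧ |p.2| ≤ (R : ℤ)}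

/-- The action of `SL₂(ℤ)` on `ℤ × ℤ` by matrix–vector multiplication. -/
def SL2act (M : Matrix.SpecialLinearGroup (Fin 2) ℤ) (z : ℤ × ℤ) : ℤ × ℤ :=
  (M.1 0 0 * z.1 + M.1 0 1 * z.2, M.1 1 0 * z.1 + M.1 1 1 * z.2)

/-- An `I`-colouring is `I`-universal if it contains every finite `I`-colouring, up to a
matrix in `SL₂(ℤ)`. -/
def IsIUniversal (I : Set ℕ) (φ : Zplus → ℕ) : Prop :=
  IsIColouring I φ ∧
    ∀ (R : ℕ) (θ : ℤ × ℤ → ℕ), (∀ z ∈ box R ∩ Zplus, θ z ∈ I ∨ θ z = 1) →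
      ∃ M : Matrix.SpecialLinearGroup (Fin 2) ℤ,
        ∀ z ∈ box R ∩ Zplus, (θ z : ℤ) = extColouring φ (SL2act M z)

/-!
Enumerate all finite `I`-colourings `θₖ` of boxes `box Rₖ ∩ (ℤ²)₊`. The matrix
`[[R+2, 1], [R+1, 1]]` maps `box R ∩ (ℤ²)₊` into `[1, (R+2)²]²`, and the shear
`(x, y) ↦ (x, c x + y)` then moves it into `x ≥ 1, c < y ≤ (c+1)(R+2)²`. With offsets
`cₖ₊₁ = (cₖ+1)(Rₖ+2)²` these images are pairwise disjoint, so a single colouring can show `θₖ`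
on the `k`-th image (colour `1` elsewhere). The line `x = 0` is never used by them: colouring
`(0, n+1)` by `p` or `q` according to whether `n ∈ C`, for distinct `p, q ∈ I`, makes the
colouring depend injectively on `C ⊆ ℕ`.
-/

open Function Set

lemma box_eq_Icc (R : ℕ) : box R = Icc (-(R : ℤ), -(R : ℤ)) (R, R) := by
  ext ⟨m, n⟩
  simp only [box, abs_le, mem_ofPred_eq, mem_Icc, Prod.mk_le_mk]
  tauto

instance finite_box (R : ℕ) : Finite (box R) := by
  rw [box_eq_Icc]
  infer_instance

lemma SL2act_one (z : ℤ × ℤ) : SL2act 1 z = z := by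
  simp [SL2act]

lemma SL2act_mul (M N : Matrix.SpecialLinearGroup (Fin 2) ℤ) (z : ℤ × ℤ) :
    SL2act (M * N) z = SL2act M (SL2act N z) := by
  simp only [SL2act, Matrix.SpecialLinearGroup.coe_mul, Matrix.mul_apply, Fin.sum_univ_two]
  ext <;> ring

lemma SL2act_injective (M : Matrix.SpecialLinearGroup (Fin 2) ℤ) : Injective (SL2act M) :=
  LeftInverse.injective (g := SL2act M⁻¹) fun z => by rw [← SL2act_mul, inv_mul_cancel, SL2act_one]

lemma extColouring_domRestrict (f : ℤ × ℤ → ℕ) {v : ℤ × ℤ} (hv : v ∈ Zplus) :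
    extColouring (Zplus.domRestrict f) v = f v := by
  simp [extColouring, hv, domRestrict_apply]

def toQuadrant (R : ℕ) : Matrix.SpecialLinearGroup (Fin 2) ℤ :=
  ⟨!![(R : ℤ) + 2, 1; (R : ℤ) + 1, 1], by simp [Matrix.det_fin_two_of]⟩

def shear (c : ℤ) : Matrix.SpecialLinearGroup (Fin 2) ℤ :=
  ⟨!![1, 0; c, 1], by simp [Matrix.det_fin_two_of]⟩

lemma SL2act_toQuadrant (R : ℕ) (z : ℤ × ℤ) :
    SL2act (toQuadrant R) z = (((R : ℤ) + 2) * z.1 + z.2, ((R : ℤ) + 1) * z.1 + z.2) := by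
  simp [SL2act, toQuadrant]

lemma SL2act_shear (c : ℤ) (v : ℤ × ℤ) : SL2act (shear c) v = (v.1, c * v.1 + v.2) := by
  simp [SL2act, shear]

lemma SL2act_toQuadrant_mem {R : ℕ} {z : ℤ × ℤ} (hz : z ∈ box R ∩ Zplus) :
    SL2act (toQuadrant R) z ∈ Icc (1, 1) (((R : ℤ) + 2) ^ 2, ((R : ℤ) + 2) ^ 2) := by
  obtain ⟨⟨hm, hn⟩, hpos⟩ := hz
  rw [abs_le] at hm hn
  have hm0 : 0 ≤ z.1 := by rcases hpos with hpos | ⟨hm0, -⟩ <;> omega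
  have hy : 1 ≤ ((R : ℤ) + 1) * z.1 + z.2 := by
    rcases hpos with hpos | ⟨hm0, hpos⟩
    · nlinarith
    · rw [hm0]
      linarith
  rw [SL2act_toQuadrant]
  exact ⟨⟨by dsimp only; linarith, hy⟩, by dsimp only; nlinarith, by dsimp only; nlinarith⟩

lemma SL2act_shear_snd_mem {c B : ℤ} (hc : 0 ≤ c) {v : ℤ × ℤ} (hv : v ∈ Icc (1, 1) (B, B)) :
    (SL2act (shear c) v).2 ∈ Ioc c ((c + 1) * B) := by
  obtain ⟨⟨h1, h2⟩, h3, h4⟩ := hv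
  rw [SL2act_shear]
  constructor <;> dsimp only at * <;> nlinarith

section Blocks

variable (R : ℕ → ℕ)

def blockOffset : ℕ → ℕ
  | 0 => 0
  | k + 1 => (blockOffset k + 1) * (R k + 2) ^ 2

lemma monotone_blockOffset : Monotone (blockOffset R) :=
  monotone_nat_of_le_succ fun k =>
    (Nat.le_succ _).trans (Nat.le_mul_of_pos_right _ (by positivity))

def blockMatrix (k : ℕ) : Matrix.SpecialLinearGroup (Fin 2) ℤ :=
  shear (blockOffset R k) * toQuadrant (R k)

def blockEmbedding (p : Σ k, ↥(box (R k) ∩ Zplus)) : ℤ × ℤ :=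
  SL2act (blockMatrix R p.1) p.2

variable {R}

lemma one_le_blockEmbedding_fst (p : Σ k, ↥(box (R k) ∩ Zplus)) :
    1 ≤ (blockEmbedding R p).1 := by
  rw [blockEmbedding, blockMatrix, SL2act_mul, SL2act_shear]
  exact (SL2act_toQuadrant_mem p.2.2).1.1

lemma blockEmbedding_snd_mem (p : Σ k, ↥(box (R k) ∩ Zplus)) :
    (blockEmbedding R p).2 ∈ Ioc (blockOffset R p.1 : ℤ) (blockOffset R (p.1 + 1)) := by
  rw [blockEmbedding, blockMatrix, SL2act_mul, blockOffset]
  push_cast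
  exact SL2act_shear_snd_mem (Nat.cast_nonneg _) (SL2act_toQuadrant_mem p.2.2)

lemma blockEmbedding_injective : Injective (blockEmbedding R) := by
  have index_le_of_eq {p p'} (h : blockEmbedding R p = blockEmbedding R p') : p.1 ≤ p'.1 := by
    by_contra! hlt
    have hp := (blockEmbedding_snd_mem p).1
    have hp' := (blockEmbedding_snd_mem p').2
    have : (blockOffset R (p'.1 + 1) : ℤ) ≤ blockOffset R p.1 := by
      exact_mod_cast monotone_blockOffset R hlt
    rw [h] at hp
    linarith
  rintro ⟨j, z⟩ ⟨k, w⟩ h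
  obtain rfl : j = k := le_antisymm (index_le_of_eq h) (index_le_of_eq h.symm)
  obtain rfl : z = w := Subtype.ext (SL2act_injective _ h)
  rfl

end Blocks

abbrev BoxPattern : Type := Σ R : ℕ, (↥(box R ∩ Zplus) → ℕ)

lemma exists_boxPattern_enumeration (S : Set ℕ) (hS : S.Nonempty) :
    ∃ P : ℕ → BoxPattern, (∀ k z, (P k).2 z ∈ S) ∧
      ∀ Q : BoxPattern, (∀ z, Q.2 z ∈ S) → ∃ k, P k = Q := by
  have : Nonempty {Q : BoxPattern // ∀ z, Q.2 z ∈ S} :=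
    ⟨⟨⟨0, fun _ => hS.some⟩, fun _ => hS.some_mem⟩⟩
  obtain ⟨e, he⟩ := exists_surjective_nat {Q : BoxPattern // ∀ z, Q.2 z ∈ S}
  refine ⟨fun k => (e k).1, fun k => (e k).2, fun Q hQ => ?_⟩
  obtain ⟨k, hk⟩ := he ⟨Q, hQ⟩
  exact ⟨k, congrArg Subtype.val hk⟩

section BlockColouring

variable (P : ℕ → BoxPattern) (line : ℤ → ℕ)

noncomputable def blockColouring (v : ℤ × ℤ) : ℕ :=
  if v.1 = 0 then line v.2
  else extend (blockEmbedding fun k => (P k).1) (fun p => (P p.1).2 p.2) 1 v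

lemma blockColouring_zero_fst (n : ℤ) : blockColouring P line (0, n) = line n := by
  simp [blockColouring]

lemma blockColouring_blockEmbedding (p : Σ k, ↥(box (P k).1 ∩ Zplus)) :
    blockColouring P line (blockEmbedding (fun k => (P k).1) p) = (P p.1).2 p.2 := by
  have hfst := one_le_blockEmbedding_fst p
  rw [blockColouring, if_neg (by omega), blockEmbedding_injective.extend_apply]

lemma extColouring_blockColouring_blockEmbedding (p : Σ k, ↥(box (P k).1 ∩ Zplus)) :
    extColouring (Zplus.domRestrict (blockColouring P line)) (blockEmbedding (fun k => (P k).1) p) =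
      (P p.1).2 p.2 := by
  rw [extColouring_domRestrict _ (Or.inl (one_le_blockEmbedding_fst p)),
    blockColouring_blockEmbedding]

lemma blockColouring_mem {S : Set ℕ} (hS : 1 ∈ S) (hP : ∀ k z, (P k).2 z ∈ S)
    (hline : ∀ n, line n ∈ S) (v : ℤ × ℤ) : blockColouring P line v ∈ S := by
  unfold blockColouring
  split_ifs
  · exact hline _
  by_cases hv : ∃ p, blockEmbedding (fun k => (P k).1) p = v
  · obtain ⟨p, rfl⟩ := hv
    rw [blockEmbedding_injective.extend_apply]
    exact hP _ _
  · rw [extend_apply' _ _ _ hv]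
    exact hS

lemma isIUniversal_blockColouring {I : Set ℕ} (hP : ∀ k z, (P k).2 z ∈ insert 1 I)
    (hsurj : ∀ Q : BoxPattern, (∀ z, Q.2 z ∈ insert 1 I) → ∃ k, P k = Q)
    (hline : ∀ n, line n ∈ insert 1 I) :
    IsIUniversal I (Zplus.domRestrict (blockColouring P line)) := by
  refine ⟨fun z => (blockColouring_mem P line (mem_insert 1 I) hP hline z).symm, ?_⟩
  intro R θ hθ
  obtain ⟨k, hk⟩ := hsurj ⟨R, fun z => θ z⟩ fun z => (hθ z z.2).symm
  refine ⟨blockMatrix (fun k => (P k).1) k, fun z hz => ?_⟩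
  have h : ∀ z : ↥(box (P k).1 ∩ Zplus), extColouring (Zplus.domRestrict (blockColouring P line))
      (SL2act (blockMatrix (fun k => (P k).1) k) z) = (P k).2 z :=
    fun z => extColouring_blockColouring_blockEmbedding P line ⟨k, z⟩
  rw [hk] at h
  exact (h ⟨z, hz⟩).symm

end BlockColouring

open scoped Classical in
noncomputable def lineColouring (p q : ℕ) (C : Set ℕ) (n : ℤ) : ℕ :=
  if (n - 1).toNat ∈ C then p else q

lemma lineColouring_mem {p q : ℕ} {S : Set ℕ} (hp : p ∈ S) (hq : q ∈ S) (C : Set ℕ) (n : ℤ) :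
    lineColouring p q C n ∈ S := by
  unfold lineColouring
  split_ifs
  exacts [hp, hq]

lemma injective_domRestrict_blockColouring_lineColouring (P : ℕ → BoxPattern) {p q : ℕ}
    (hpq : p ≠ q) :
    Injective fun C => Zplus.domRestrict (blockColouring P (lineColouring p q C)) := by
  intro C C' h
  ext n
  have hn := congrFun h ⟨(0, n + 1), Or.inr ⟨rfl, by positivity⟩⟩
  simp only [domRestrict_apply, blockColouring_zero_fst, lineColouring, add_sub_cancel_right,
    Int.toNat_natCast] at hn
  split_ifs at hn <;> simp_all

theorem exists_continuum_universal_colourings_general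
    (I : Set ℕ) (hI2 : I.Nontrivial) :
    ∃ F : Set ℕ → (Zplus → ℕ), Function.Injective F ∧ ∀ C, IsIUniversal I (F C) := by
  obtain ⟨p, hp, q, hq, hpq⟩ := hI2
  obtain ⟨P, hPI, hP⟩ := exists_boxPattern_enumeration (insert 1 I) (insert_nonempty 1 I)
  refine ⟨fun C => Zplus.domRestrict (blockColouring P (lineColouring p q C)),
    injective_domRestrict_blockColouring_lineColouring P hpq, fun C => ?_⟩
  exact isIUniversal_blockColouring P _ hPI hP
    (lineColouring_mem (mem_insert_of_mem 1 hp) (mem_insert_of_mem 1 hq) C)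

/-- For every set `I` of primes with at least two elements there exist continuum many
`I`-universal colourings: the powerset of `ℕ` imbeds into the set of `I`-universal
colourings. -/
theorem exists_continuum_universal_colourings
    (I : Set ℕ) (hI : ∀ p ∈ I, p.Prime) (hI2 : I.Nontrivial) :
    ∃ F : Set ℕ → (Zplus → ℕ), Function.Injective F ∧ ∀ C, IsIUniversal I (F C) :=
  exists_continuum_universal_colourings_general I hI2
end
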